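/- arXiv:math/0205050 — 4 statements merged into one kernel-verified Lean document; each statement's English description precedes it below -/
import Mathlib

section
/- Let n ≥ 1, let μ ∈ ℤ^n be a dominant coweight, let k < l ≤ k+n be integers, and let v_k, v_l ∈ ℤ^n satisfy: v_k − ω_k ∈ P_μ, v_l − ω_l ∈ P_μ, v_l − v_k has all coordinates in {0,1}, and Σ(v_l) − Σ(v_k) = l − k. Then there exists v_{k+1} ∈ ℤ^n such that v_{k+1} − ω_{k+1} ∈ P_μ, both v_{k+1} − v_k and v_l − v_{k+1} have all coordinates in {0,1}, and Σ(v_{k+1}) = Σ(v_k) + 1. -/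
/-- The vector `ω_i ∈ ℤ^n`, for `i ∈ ℤ`: for `0 ≤ i ≤ n` it is `(1,…,1,0,…,0)` with `i`
ones, and `ω_{i+n} = ω_i + (1,…,1)`. -/
def omegaVec (n : ℕ) (i : ℤ) : Fin n → ℤ := fun t => (i - ((t : ℤ) + 1)).fdiv n + 1

/-- `P_μ`: the convex hull in `ℝ^n` of the orbit of `μ` under the symmetric group
permuting the coordinates. -/
def Pmu (n : ℕ) (μ : Fin n → ℤ) : Set (Fin n → ℝ) :=
  convexHull ℝ {x : Fin n → ℝ | ∃ σ : Equiv.Perm (Fin n), x = fun t => (μ (σ t) : ℝ)}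

/-- `v ∈ P_μ` for an integral vector `v`. -/
def inPmu (n : ℕ) (μ : Fin n → ℤ) (v : Fin n → ℤ) : Prop :=
  (fun t => (v t : ℝ)) ∈ Pmu n μ

/-!
By Rado's theorem, a real vector `x` lies in `P_μ` iff `∑ x = ∑ μ` and, for every set `A` of
coordinates, `∑_{t ∈ A} x t` is at most the sum of the `#A` largest entries of `μ`. Necessity holds
at the vertices; for sufficiency, separate `x` from `P_μ` by a hyperplane and compare `x`, by Abel
summation, with the vertex of `P_μ` ordered like the normal vector.

For integral points this gives an exchange property: if `x, y ∈ P_μ ∩ ℤⁿ` and `y t₀ < x t₀`, some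
`s` with `x s < y s` has `x + e_s - e_{t₀} ∈ P_μ`. Otherwise every such `s` lies in a tight set
`A ∌ t₀` (one where `∑_A x` attains its bound). The bound is submodular in `A`, so tight sets
are closed under union; their union `U` contains `{x < y}` and misses `t₀`, which forces
`∑_U y > ∑_U x`, contradicting `y ∈ P_μ`.

The theorem is this exchange for `x = v_k - ω_k`, `y = v_l - ω_l` and the coordinate `t₀` with
`ω_{k+1} = ω_k + e_{t₀}`: unless `v_l - v_k` is already `1` at `t₀` we have `y t₀ < x t₀`, and
`x s < y s` forces `(v_l - v_k) s = 1` because `ω_k ≤ ω_l`; take `v_{k+1} = v_k + e_s`.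
-/

open Finset

section PrefixSum

variable {n : ℕ} {M : Type*}

-- For antitone `μ`, `prefixSum μ m` is the sum of the `m` largest entries of `μ`.
def prefixSum [AddCommMonoid M] (f : Fin n → M) (m : ℕ) : M :=
  ∑ t : Fin n with t.val < m, f t

section AddCommMonoid
variable [AddCommMonoid M]

@[simp]
lemma prefixSum_zero (f : Fin n → M) : prefixSum f 0 = 0 := by
  simp [prefixSum]

lemma prefixSum_succ (f : Fin n → M) {m : ℕ} (hm : m < n) :
    prefixSum f (m + 1) = prefixSum f m + f ⟨m, hm⟩ := by
  have : univ.filter (fun t : Fin n => t.val < m + 1) =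
      insert ⟨m, hm⟩ (univ.filter fun t : Fin n => t.val < m) := by
    ext t
    simp only [mem_filter, mem_univ, true_and, mem_insert, Fin.ext_iff]
    omega
  rw [prefixSum, this, sum_insert (by simp), add_comm, prefixSum]

lemma prefixSum_self (f : Fin n → M) : prefixSum f n = ∑ t, f t := by
  simp [prefixSum]

end AddCommMonoid

lemma Antitone.sum_le_prefixSum_card [AddCommMonoid M] [PartialOrder M] [IsOrderedAddMonoid M]
    {μ : Fin n → M} (hμ : Antitone μ) (A : Finset (Fin n)) :
    ∑ t ∈ A, μ t ≤ prefixSum μ #A := by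
  induction A using Finset.induction_on_max with
  | empty => simp
  | insert a A hlt ih =>
    have hA : #A ≤ a := by simpa using card_le_card (fun t ht => mem_Iio.2 (hlt t ht))
    rw [sum_insert (fun h => (hlt a h).false), card_insert_of_notMem (fun h => (hlt a h).false),
      prefixSum_succ μ (hA.trans_lt a.2), add_comm]
    exact add_le_add ih (hμ (Fin.le_def.2 hA))

lemma Antitone.prefixSum_add_sub_le [AddCommGroup M] [PartialOrder M] [IsOrderedAddMonoid M]
    {μ : Fin n → M} (hμ : Antitone μ) {v a w : ℕ} (hva : v ≤ a) (hn : a + w ≤ n) :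
    prefixSum μ (a + w) - prefixSum μ a ≤ prefixSum μ (v + w) - prefixSum μ v := by
  induction w with
  | zero => simp
  | succ w ih =>
    rw [← add_assoc, ← add_assoc, prefixSum_succ μ (by omega), prefixSum_succ μ (by omega)]
    rw [add_sub_right_comm, add_sub_right_comm (prefixSum μ (v + w))]
    exact add_le_add (ih (by omega)) (hμ (Fin.le_def.2 (by simp only; omega)))

lemma Antitone.prefixSum_card_union_add_inter_le [AddCommGroup M] [PartialOrder M]
    [IsOrderedAddMonoid M] {μ : Fin n → M} (hμ : Antitone μ) (A B : Finset (Fin n)) :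
    prefixSum μ #(A ∪ B) + prefixSum μ #(A ∩ B) ≤ prefixSum μ #A + prefixSum μ #B := by
  have hunion := card_union_add_card_inter A B
  have hinter : #(A ∩ B) ≤ #A := card_le_card inter_subset_left
  have hinterB : #(A ∩ B) ≤ #B := card_le_card inter_subset_right
  have hle : #(A ∪ B) ≤ n := by simpa using card_le_univ (A ∪ B)
  have := hμ.prefixSum_add_sub_le (w := #B - #(A ∩ B)) hinter (by omega)
  rw [show #A + (#B - #(A ∩ B)) = #(A ∪ B) by omega,
    show #(A ∩ B) + (#B - #(A ∩ B)) = #B by omega] at this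
  rw [← sub_nonneg] at this ⊢
  convert this using 1
  abel

lemma Antitone.sum_mul_nonpos_of_prefixSum_nonpos {R : Type*} [CommRing R] [LinearOrder R]
    [IsStrictOrderedRing R] {c d : Fin n → R} (hc : Antitone c)
    (hd : ∀ m ≤ n, prefixSum d m ≤ 0) (hd0 : ∑ i, d i = 0) : ∑ i, c i * d i ≤ 0 := by
  have key : ∀ m ≤ n, ∀ K : R, (∀ i : Fin n, i.val < m → K ≤ c i) →
      prefixSum (fun i => c i * d i) m ≤ K * prefixSum d m := by
    intro m
    induction m with
    | zero => simp
    | succ m ih =>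
      intro hm K hK
      set cm := c ⟨m, hm⟩
      calc prefixSum (fun i => c i * d i) (m + 1)
          = prefixSum (fun i => c i * d i) m + cm * d ⟨m, hm⟩ := prefixSum_succ _ hm
        _ ≤ cm * prefixSum d m + cm * d ⟨m, hm⟩ := by
            gcongr
            exact ih (by omega) _ fun i hi => hc (Fin.le_def.2 hi.le)
        _ = cm * prefixSum d (m + 1) := by rw [prefixSum_succ _ hm, mul_add]
        _ ≤ K * prefixSum d (m + 1) := mul_le_mul_of_nonpos_right (hK _ (by simp)) (hd _ hm)
  obtain ⟨K, hK⟩ := (Set.finite_range c).bddBelow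
  simpa [prefixSum_self, hd0] using key n le_rfl K fun i _ => hK ⟨i, rfl⟩

end PrefixSum

section Permutohedron

variable {n : ℕ} {μ : Fin n → ℤ}

lemma sum_le_prefixSum_of_mem_Pmu (hμ : Antitone μ) {x : Fin n → ℝ} (hx : x ∈ Pmu n μ)
    (A : Finset (Fin n)) : ∑ t ∈ A, x t ≤ (↑(prefixSum μ #A) : ℝ) := by
  let L : (Fin n → ℝ) →ₗ[ℝ] ℝ := ∑ t ∈ A, LinearMap.proj t
  have : L x ∈ Set.Iic (↑(prefixSum μ #A) : ℝ) := by
    refine convexHull_min (t := L ⁻¹' Set.Iic (↑(prefixSum μ #A) : ℝ)) ?_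
      ((convex_Iic _).linear_preimage L) hx
    rintro _ ⟨σ, rfl⟩
    have := hμ.sum_le_prefixSum_card (A.map σ.toEmbedding)
    rw [sum_map, card_map] at this
    simpa [L] using (Int.cast_le (R := ℝ)).2 this
  simpa [L] using this

lemma sum_eq_of_mem_Pmu {x : Fin n → ℝ} (hx : x ∈ Pmu n μ) : ∑ t, x t = ∑ t, (μ t : ℝ) := by
  let L : (Fin n → ℝ) →ₗ[ℝ] ℝ := ∑ t, LinearMap.proj t
  have : L x ∈ ({∑ t, (μ t : ℝ)} : Set ℝ) := by
    refine convexHull_min (t := L ⁻¹' {∑ t, (μ t : ℝ)}) ?_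
      ((convex_singleton _).linear_preimage L) hx
    rintro _ ⟨σ, rfl⟩
    simpa [L] using Equiv.sum_comp σ fun t => (μ t : ℝ)
  simpa [L] using this

lemma exists_perm_sum_mul_le {x : Fin n → ℝ} (hsum : ∑ t, x t = ∑ t, (μ t : ℝ))
    (hA : ∀ A : Finset (Fin n), ∑ t ∈ A, x t ≤ (↑(prefixSum μ #A) : ℝ)) (c : Fin n → ℝ) :
    ∃ σ : Equiv.Perm (Fin n), ∑ t, c t * x t ≤ ∑ t, c t * μ (σ t) := by
  set π := Tuple.sort fun t => -c t
  have hc : Antitone (c ∘ π) := fun i j hij =>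
    neg_le_neg_iff.1 (Tuple.monotone_sort (fun t => -c t) hij)
  refine ⟨π.symm, ?_⟩
  rw [← Equiv.sum_comp π (fun t => c t * x t),
    ← Equiv.sum_comp π (fun t => c t * μ (π.symm t)),
    ← sub_nonpos, ← sum_sub_distrib]
  simp only [Equiv.symm_apply_apply, ← mul_sub]
  refine hc.sum_mul_nonpos_of_prefixSum_nonpos (d := fun i => x (π i) - μ i) (fun m hm => ?_) ?_
  · have hcard : #(univ.filter fun i : Fin n => i.val < m) = m := by
      simpa [hm] using Fin.card_filter_val_lt (n := n) (m := m)
    have := hA ((univ.filter fun i : Fin n => i.val < m).map π.toEmbedding)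
    rw [sum_map, card_map, hcard] at this
    simp only [prefixSum, sum_sub_distrib] at this ⊢
    push_cast at this
    simpa using this
  · rw [sum_sub_distrib, Equiv.sum_comp π x, hsum, sub_self]

lemma mem_Pmu_of_sum_le {x : Fin n → ℝ} (hsum : ∑ t, x t = ∑ t, (μ t : ℝ))
    (hA : ∀ A : Finset (Fin n), ∑ t ∈ A, x t ≤ (↑(prefixSum μ #A) : ℝ)) : x ∈ Pmu n μ := by
  by_contra hx
  have hclosed : IsClosed (Pmu n μ) :=
    ((Set.finite_range fun σ : Equiv.Perm (Fin n) => fun t => (μ (σ t) : ℝ)).subset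
      (by rintro _ ⟨σ, rfl⟩; exact ⟨σ, rfl⟩)).isClosed_convexHull ℝ
  obtain ⟨f, u, hfu, hux⟩ := geometric_hahn_banach_closed_point (convex_convexHull ℝ _) hclosed hx
  have hf : ∀ y, f y = ∑ t, f (fun j => if t = j then 1 else 0) * y t := fun y => by
    simpa [mul_comm] using (f : (Fin n → ℝ) →ₗ[ℝ] ℝ).pi_apply_eq_sum_univ y
  obtain ⟨σ, hσ⟩ := exists_perm_sum_mul_le hsum hA fun t => f fun j => if t = j then 1 else 0
  have hvertex := hfu _ (subset_convexHull ℝ _ ⟨σ, rfl⟩)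
  rw [hf] at hvertex hux
  linarith

theorem mem_Pmu_iff (hμ : Antitone μ) {x : Fin n → ℝ} :
    x ∈ Pmu n μ ↔ ∑ t, x t = ∑ t, (μ t : ℝ) ∧
      ∀ A : Finset (Fin n), ∑ t ∈ A, x t ≤ (↑(prefixSum μ #A) : ℝ) :=
  ⟨fun hx => ⟨sum_eq_of_mem_Pmu hx, sum_le_prefixSum_of_mem_Pmu hμ hx⟩,
    fun h => mem_Pmu_of_sum_le h.1 h.2⟩

theorem inPmu_iff (hμ : Antitone μ) {z : Fin n → ℤ} :
    inPmu n μ z ↔ ∑ t, z t = ∑ t, μ t ∧ ∀ A : Finset (Fin n), ∑ t ∈ A, z t ≤ prefixSum μ #A := by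
  rw [inPmu, mem_Pmu_iff hμ]
  norm_cast

end Permutohedron

section Exchange

variable {n : ℕ} {μ : Fin n → ℤ}

lemma sum_biUnion_eq_prefixSum (hμ : Antitone μ) {x : Fin n → ℤ}
    (hx : ∀ A : Finset (Fin n), ∑ t ∈ A, x t ≤ prefixSum μ #A) {ι : Type*} [DecidableEq ι]
    (S : Finset ι) {A : ι → Finset (Fin n)} (hA : ∀ i ∈ S, ∑ t ∈ A i, x t = prefixSum μ #(A i)) :
    ∑ t ∈ S.biUnion A, x t = prefixSum μ #(S.biUnion A) := by
  induction S using Finset.induction_on with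
  | empty => simp
  | insert i S _ ih =>
    rw [biUnion_insert]
    have hi := hA i (mem_insert_self i S)
    have hS := ih fun j hj => hA j (mem_insert_of_mem hj)
    have := hμ.prefixSum_card_union_add_inter_le (A i) (S.biUnion A)
    have := hx (A i ∪ S.biUnion A)
    have := hx (A i ∩ S.biUnion A)
    have := sum_union_inter (s₁ := A i) (s₂ := S.biUnion A) (f := x)
    omega

lemma exists_tight_of_not_inPmu (hμ : Antitone μ) {x : Fin n → ℤ} (hx : inPmu n μ x)
    {s t₀ : Fin n} (h : ¬ inPmu n μ (x + Pi.single s 1 - Pi.single t₀ 1)) :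
    ∃ A : Finset (Fin n), s ∈ A ∧ t₀ ∉ A ∧ ∑ t ∈ A, x t = prefixSum μ #A := by
  rw [inPmu_iff hμ] at hx h
  have hsum : ∑ t, (x + Pi.single s 1 - Pi.single t₀ 1 : Fin n → ℤ) t = ∑ t, μ t := by
    simp [sum_add_distrib, sum_sub_distrib, hx.1]
  simp only [hsum, true_and, not_forall, not_le] at h
  obtain ⟨A, hA⟩ := h
  have := hx.2 A
  simp only [Pi.add_apply, Pi.sub_apply, sum_add_distrib, sum_sub_distrib, sum_pi_single'] at hA
  refine ⟨A, ?_, ?_, ?_⟩ <;> split_ifs at hA <;> omega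

theorem exists_exchange_inPmu (hμ : Antitone μ) {x y : Fin n → ℤ} (hx : inPmu n μ x)
    (hy : inPmu n μ y) {t₀ : Fin n} (ht₀ : y t₀ < x t₀) :
    ∃ s, x s < y s ∧ inPmu n μ (x + Pi.single s 1 - Pi.single t₀ 1) := by
  by_contra! h
  choose! A hsA ht₀A hA using fun s hs => exists_tight_of_not_inPmu hμ hx (h s hs)
  rw [inPmu_iff hμ] at hx hy
  set S : Finset (Fin n) := {s | x s < y s}
  set U := S.biUnion A
  have hU : ∑ t ∈ U, x t = prefixSum μ #U :=
    sum_biUnion_eq_prefixSum hμ hx.2 S fun s hs => hA s (by simpa [S] using hs)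
  have hcompl : ∑ t ∈ Uᶜ, y t < ∑ t ∈ Uᶜ, x t := by
    refine sum_lt_sum (fun t ht => ?_) ⟨t₀, ?_, ht₀⟩
    · by_contra! hlt
      exact mem_compl.1 ht (mem_biUnion.2 ⟨t, by simpa [S] using hlt, hsA t hlt⟩)
    · refine mem_compl.2 fun ht => ?_
      obtain ⟨s, hs, ht₀s⟩ := mem_biUnion.1 ht
      exact ht₀A s (by simpa [S] using hs) ht₀s
  have := hy.2 U
  have := sum_add_sum_compl U x
  have := sum_add_sum_compl U y
  omega

end Exchange

section OmegaVec

lemma omegaVec_mono (n : ℕ) {i j : ℤ} (hij : i ≤ j) (t : Fin n) :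
    omegaVec n i t ≤ omegaVec n j t := by
  have hn : (0 : ℤ) < n := by exact_mod_cast t.pos
  simp only [omegaVec, Int.fdiv_eq_ediv_of_nonneg _ hn.le]
  have := Int.ediv_le_ediv hn (show i - (t + 1) ≤ j - (t + 1) by omega)
  omega

lemma Int.ediv_sub_ediv_sub_one {a b : ℤ} (hb : 0 < b) :
    a / b - (a - 1) / b = if b ∣ a then 1 else 0 := by
  have h := Int.emod_add_mul_ediv a b
  have h0 := Int.emod_nonneg a hb.ne'
  have h1 := Int.emod_lt_of_pos a hb
  split_ifs with hd
  · have hr := Int.emod_eq_zero_of_dvd hd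
    have : (a - 1) / b = a / b - 1 :=
      ((Int.ediv_emod_unique (r := b - 1) hb).2 ⟨by linarith, by linarith, by linarith⟩).1
    omega
  · have hr : a % b ≠ 0 := fun h => hd (Int.dvd_of_emod_eq_zero h)
    have : (a - 1) / b = a / b :=
      ((Int.ediv_emod_unique (r := a % b - 1) hb).2 ⟨by linarith, by omega, by omega⟩).1
    omega

lemma exists_omegaVec_add_one {n : ℕ} (hn : 0 < n) (i : ℤ) :
    ∃ t₀ : Fin n, omegaVec n (i + 1) = omegaVec n i + Pi.single t₀ 1 := by
  have hn' : (0 : ℤ) < n := by exact_mod_cast hn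
  have h0 := Int.emod_nonneg i hn'.ne'
  have h1 := Int.emod_lt_of_pos i hn'
  let t₀ : Fin n := ⟨(i % n).toNat, by omega⟩
  have ht₀ : (t₀ : ℤ) = i % n := Int.toNat_of_nonneg h0
  have hdvd : ∀ t : Fin n, (n : ℤ) ∣ i - t ↔ t = t₀ := fun t => by
    have hdvd₀ : (n : ℤ) ∣ i - t₀ := ht₀ ▸ Int.dvd_self_sub_of_emod_eq rfl
    refine ⟨fun ht => Fin.ext ?_, fun ht => ht ▸ hdvd₀⟩
    have := Int.eq_zero_of_abs_lt_dvd (dvd_sub hdvd₀ ht) (abs_lt.2 ⟨by omega, by omega⟩)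
    omega
  refine ⟨t₀, funext fun t => ?_⟩
  have := Int.ediv_sub_ediv_sub_one (a := i - t) hn'
  rw [show i - t - 1 = i - (t + 1) by ring] at this
  simp only [hdvd t] at this
  simp only [omegaVec, Int.fdiv_eq_ediv_of_nonneg _ hn'.le, Pi.add_apply, Pi.single_apply]
  rw [show i + 1 - (t + 1) = i - t by ring]
  split_ifs at this ⊢ <;> omega

end OmegaVec

theorem extend_perm_GLn_general (n : ℕ) (hn : 1 ≤ n)
    (μ : Fin n → ℤ) (hμ : ∀ i j : Fin n, i ≤ j → μ j ≤ μ i)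
    (k l : ℤ) (hkl : k < l)
    (vk vl : Fin n → ℤ)
    (hvk : inPmu n μ (fun t => vk t - omegaVec n k t))
    (hvl : inPmu n μ (fun t => vl t - omegaVec n l t))
    (hmin : ∀ t, vl t - vk t = 0 ∨ vl t - vk t = 1) :
    ∃ v' : Fin n → ℤ,
      inPmu n μ (fun t => v' t - omegaVec n (k + 1) t) ∧
      (∀ t, v' t - vk t = 0 ∨ v' t - vk t = 1) ∧
      (∀ t, vl t - v' t = 0 ∨ vl t - v' t = 1) ∧
      (∑ t, v' t) = (∑ t, vk t) + 1 := by
  obtain ⟨t₀, hω⟩ := exists_omegaVec_add_one hn k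
  have hkl_le : ∀ t, omegaVec n k t ≤ omegaVec n l t := omegaVec_mono n hkl.le
  have hjump : omegaVec n k t₀ + 1 ≤ omegaVec n l t₀ := by
    simpa [hω] using omegaVec_mono n (show k + 1 ≤ l by omega) t₀
  suffices ∃ s, vl s - vk s = 1 ∧
      inPmu n μ ((fun t => vk t - omegaVec n k t) + Pi.single s 1 - Pi.single t₀ 1) by
    obtain ⟨s, hs, hmem⟩ := this
    refine ⟨vk + Pi.single s 1, ?_, fun t => ?_, fun t => ?_, ?_⟩
    · convert hmem using 2 with t
      simp only [hω, Pi.add_apply, Pi.sub_apply]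
      ring
    · by_cases h : t = s <;> simp [h]
    · by_cases h : t = s
      · subst h
        simp only [Pi.add_apply, Pi.single_eq_same]
        omega
      · simpa [h] using hmin t
    · simp [sum_add_distrib]
  by_cases h₀ : vl t₀ - vk t₀ = 1
  · exact ⟨t₀, h₀, by simpa using hvk⟩
  obtain ⟨s, hs, hmem⟩ := exists_exchange_inPmu (fun i j => hμ i j) hvk hvl
    (show vl t₀ - omegaVec n l t₀ < vk t₀ - omegaVec n k t₀ by have := hmin t₀; omega)
  exact ⟨s, by have := hmin s; have := hkl_le s; omega, hmem⟩

/-- **Lemma (extension step for `GL_n`).** Let `μ` be a dominant coweight, `k < l ≤ k + n`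
integers, and `vk, vl ∈ ℤ^n` with `vk - ω_k ∈ P_μ`, `vl - ω_l ∈ P_μ`, `vl - vk` minuscule
(all coordinates `0` or `1`) and `Σ(vl) - Σ(vk) = l - k`. Then there is `v' ∈ ℤ^n` with
`v' - ω_{k+1} ∈ P_μ`, `v' - vk` and `vl - v'` minuscule, and `Σ(v') = Σ(vk) + 1`. -/
theorem extend_perm_GLn (n : ℕ) (hn : 1 ≤ n)
    (μ : Fin n → ℤ) (hμ : ∀ i j : Fin n, i ≤ j → μ j ≤ μ i)
    (k l : ℤ) (hkl : k < l) (hln : l ≤ k + n)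
    (vk vl : Fin n → ℤ)
    (hvk : inPmu n μ (fun t => vk t - omegaVec n k t))
    (hvl : inPmu n μ (fun t => vl t - omegaVec n l t))
    (hmin : ∀ t, vl t - vk t = 0 ∨ vl t - vk t = 1)
    (hsum : (∑ t, vl t) - (∑ t, vk t) = l - k) :
    ∃ v' : Fin n → ℤ,
      inPmu n μ (fun t => v' t - omegaVec n (k + 1) t) ∧
      (∀ t, v' t - vk t = 0 ∨ v' t - vk t = 1) ∧
      (∀ t, vl t - v' t = 0 ∨ vl t - v' t = 1) ∧
      (∑ t, v' t) = (∑ t, vk t) + 1 :=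
  extend_perm_GLn_general n hn μ hμ k l hkl vk vl hvk hvl hmin
end

section
/- Let n ≥ 1, let μ ∈ ℤ^n be a dominant coweight, and let J ⊆ I ⊆ ℤ be nonempty periodic subsets. Then the restriction map sending a face (v_i)_{i∈I} of type I to the face (v_j)_{j∈J} of type J maps the set Perm_I(μ) of μ-permissible faces of type I surjectively onto the set Perm_J(μ) of μ-permissible faces of type J; that is, every μ-permissible face of type J extends to a μ-permissible face of type I. -/
/-- A subset `I ⊆ ℤ` is periodic if `i ∈ I ↔ i + n ∈ I`. -/
def IsPeriodic (n : ℕ) (I : Set ℤ) : Prop := ∀ i : ℤ, i ∈ I ↔ i + n ∈ I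

/-- A family `(v_i)_{i ∈ I}` (given as a total function, with conditions only on `I`) is a
face of type `I`: `v_{i+n} = v_i + (1,…,1)`, `v_i ≤ v_j` componentwise for `i ≤ j` in `I`,
and `Σ(v_j) - Σ(v_i) = j - i` for `i, j ∈ I`. -/
def IsFace (n : ℕ) (I : Set ℤ) (v : ℤ → Fin n → ℤ) : Prop :=
  (∀ i ∈ I, ∀ t, v (i + n) t = v i t + 1) ∧
  (∀ i ∈ I, ∀ j ∈ I, i ≤ j → ∀ t, v i t ≤ v j t) ∧
  (∀ i ∈ I, ∀ j ∈ I, (∑ t, v j t) - (∑ t, v i t) = j - i)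

/-!
By Rado's theorem, an integral vector lies in `P_μ` iff it is majorized by `μ`; its hard direction
follows by moving units between coordinates, each move being a convex combination of a vector
and a transposed copy of it.

A permissible face of type `J` is extended by one residue class `i + nℤ` at a time. If `p < i < q`
are the neighbours of `i` in `J`, then `v_q = v_p + 1_S` and `ω_q = ω_p + 1_T` with `T` the residues
of `p, …, q - 1`, so `v_q - ω_q = (v_p - ω_p) + 1_S - 1_T`. Because the tight sets of a majorized
vector are closed under union, each `t ∈ T` can be exchanged against some `s ∈ S` while staying
majorized by `μ`; doing this for the residues of `p, …, i - 1` yields `S' ⊆ S` such that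
`v_i = v_p + 1_{S'}` is a permissible vertex between `v_p` and `v_q`, and `v_i + k` is placed at
`i + kn`. After finitely many residue classes the face is defined on all of `ℤ`, hence on `I`.
-/

open Finset

namespace PermRestriction

variable {n : ℕ}

section Majorization

variable {μ c : Fin n → ℤ}

def entry (μ : Fin n → ℤ) (j : ℕ) : ℤ := if h : j < n then μ ⟨j, h⟩ else 0

def topSum (μ : Fin n → ℤ) (k : ℕ) : ℤ := ∑ j ∈ range k, entry μ j

/-- `c ≺ μ`: for antitone `μ`, `topSum μ k` is the sum of the `k` largest entries of `μ`. -/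
def IsMajorizedBy (c μ : Fin n → ℤ) : Prop :=
  ∑ t, c t = ∑ t, μ t ∧ ∀ U : Finset (Fin n), ∑ t ∈ U, c t ≤ topSum μ #U

@[simp] lemma entry_val (μ : Fin n → ℤ) (t : Fin n) : entry μ t = μ t := by
  simp [entry]

lemma topSum_succ (μ : Fin n → ℤ) (k : ℕ) : topSum μ (k + 1) = topSum μ k + entry μ k :=
  sum_range_succ _ _

lemma topSum_add (μ ν : Fin n → ℤ) (k : ℕ) : topSum (μ + ν) k = topSum μ k + topSum ν k := by
  rw [topSum, topSum, topSum, ← sum_add_distrib]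
  refine sum_congr rfl fun j _ => ?_
  unfold entry
  split_ifs <;> simp

lemma topSum_sub (μ ν : Fin n → ℤ) (k : ℕ) : topSum (μ - ν) k = topSum μ k - topSum ν k := by
  rw [topSum, topSum, topSum, ← sum_sub_distrib]
  refine sum_congr rfl fun j _ => ?_
  unfold entry
  split_ifs <;> simp

lemma topSum_single (P : Fin n) (k : ℕ) :
    topSum (Pi.single P 1) k = if (P : ℕ) < k then 1 else 0 := by
  have h : ∀ j, entry (Pi.single P 1) j = if (P : ℕ) = j then 1 else 0 := by
    intro j
    by_cases hj : j < n
    · simp [entry, hj, Pi.single_apply, Fin.ext_iff, eq_comm]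
    · simp [entry, hj, show (P : ℕ) ≠ j by omega]
  simp only [topSum, h, sum_ite_eq, mem_range]

def initialSegment (n k : ℕ) : Finset (Fin n) := {t | (t : ℕ) < k}

lemma map_initialSegment {k : ℕ} (hk : k ≤ n) :
    (initialSegment n k).map Fin.valEmbedding = range k := by
  ext j
  simp only [initialSegment, mem_map, mem_filter, mem_univ, true_and, Fin.valEmbedding_apply,
    mem_range]
  exact ⟨fun ⟨t, ht, htj⟩ => htj ▸ ht, fun hj => ⟨⟨j, by omega⟩, hj, rfl⟩⟩

lemma card_initialSegment {k : ℕ} (hk : k ≤ n) : #(initialSegment n k) = k := by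
  rw [← card_map Fin.valEmbedding, map_initialSegment hk, card_range]

lemma topSum_eq_sum_initialSegment (μ : Fin n → ℤ) {k : ℕ} (hk : k ≤ n) :
    topSum μ k = ∑ t ∈ initialSegment n k, μ t := by
  rw [topSum, ← map_initialSegment hk, sum_map]
  simp

lemma topSum_self (μ : Fin n → ℤ) : topSum μ n = ∑ t, μ t := by
  rw [topSum_eq_sum_initialSegment μ le_rfl]
  exact sum_congr (filter_true_of_mem fun t _ => t.isLt) fun _ _ => rfl

lemma sum_le_sum_of_card_eq {ι : Type*} {f : ι → ℤ} {A B : Finset ι} (hAB : #A = #B)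
    (h : ∀ a ∈ A, ∀ b ∈ B, f a ≤ f b) : ∑ a ∈ A, f a ≤ ∑ b ∈ B, f b := by
  rcases A.eq_empty_or_nonempty with rfl | hA
  · rw [card_empty, eq_comm, card_eq_zero] at hAB
    simp [hAB]
  calc ∑ a ∈ A, f a ≤ #A • A.sup' hA f := sum_le_card_nsmul _ _ _ fun a ha => le_sup' f ha
    _ = #B • A.sup' hA f := by rw [hAB]
    _ ≤ ∑ b ∈ B, f b := card_nsmul_le_sum _ _ _ fun b hb => sup'_le hA f fun a ha => h a ha b hb

lemma sum_le_topSum_card (hμ : Antitone μ) (U : Finset (Fin n)) :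
    ∑ t ∈ U, μ t ≤ topSum μ #U := by
  set F := initialSegment n #U
  rw [topSum_eq_sum_initialSegment μ (card_finset_fin_le U), ← sum_inter_add_sum_sdiff U F,
    ← sum_inter_add_sum_sdiff F U, inter_comm]
  refine add_le_add le_rfl <| sum_le_sum_of_card_eq
    (card_sdiff_comm (card_initialSegment (card_finset_fin_le U)).symm)
    fun a ha b hb => hμ ?_
  simp only [F, initialSegment, mem_sdiff, mem_filter, mem_univ, true_and] at ha hb
  exact Fin.le_def.mpr (by omega)

lemma topSum_add_topSum_le (hμ : Antitone μ) {i k l u : ℕ} (hik : i ≤ k) (hil : i ≤ l)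
    (hsum : u + i = k + l) (hun : u ≤ n) :
    topSum μ u + topSum μ i ≤ topSum μ k + topSum μ l := by
  have hu : topSum μ u = topSum μ k + ∑ j ∈ range (u - k), entry μ (k + j) := by
    rw [topSum, topSum, ← sum_range_add_sum_Ico _ (by omega : k ≤ u), sum_Ico_eq_sum_range]
  have hl : topSum μ l = topSum μ i + ∑ j ∈ range (l - i), entry μ (i + j) := by
    rw [topSum, topSum, ← sum_range_add_sum_Ico _ hil, sum_Ico_eq_sum_range]
  have hkl : ∑ j ∈ range (u - k), entry μ (k + j) ≤ ∑ j ∈ range (l - i), entry μ (i + j) := by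
    rw [show u - k = l - i by omega]
    refine sum_le_sum fun j hj => ?_
    rw [mem_range] at hj
    rw [entry, entry, dif_pos (by omega), dif_pos (by omega)]
    exact hμ (Fin.le_def.mpr (by simp only; omega))
  omega

lemma IsMajorizedBy.sum_union_eq_topSum (hμ : Antitone μ) (hc : IsMajorizedBy c μ)
    {U V : Finset (Fin n)} (hU : ∑ t ∈ U, c t = topSum μ #U)
    (hV : ∑ t ∈ V, c t = topSum μ #V) : ∑ t ∈ U ∪ V, c t = topSum μ #(U ∪ V) := by
  have hsum := sum_union_inter (s₁ := U) (s₂ := V) (f := c)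
  have hcard := card_union_add_card_inter U V
  have := topSum_add_topSum_le hμ (card_le_card inter_subset_left)
    (card_le_card inter_subset_right) hcard (card_finset_fin_le _)
  have := hc.2 (U ∪ V)
  have := hc.2 (U ∩ V)
  omega

lemma isLinearMap_sum_apply (U : Finset (Fin n)) :
    IsLinearMap ℝ fun x : Fin n → ℝ => ∑ t ∈ U, x t :=
  ⟨fun _ _ => sum_add_distrib, fun a x => (mul_sum U x a).symm⟩

lemma isMajorizedBy_of_inPmu (hμ : Antitone μ) (hc : inPmu n μ c) : IsMajorizedBy c μ := by
  have hsum : Pmu n μ ⊆ {x | ∑ t, x t = ∑ t, (μ t : ℝ)} := by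
    refine convexHull_min ?_ (convex_hyperplane (isLinearMap_sum_apply univ) _)
    rintro _ ⟨σ, rfl⟩
    exact Equiv.sum_comp σ fun t => (μ t : ℝ)
  have hU (U : Finset (Fin n)) : Pmu n μ ⊆ {x | ∑ t ∈ U, x t ≤ (topSum μ #U : ℝ)} := by
    refine convexHull_min ?_ (convex_halfSpace_le (isLinearMap_sum_apply U) _)
    rintro _ ⟨σ, rfl⟩
    have := sum_le_topSum_card hμ (U.map σ.toEmbedding)
    rw [sum_map, card_map] at this
    simp only [Set.mem_ofPred_eq]
    exact_mod_cast this
  refine ⟨?_, fun U => ?_⟩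
  · have := hsum hc
    simp only [Set.mem_ofPred_eq] at this
    exact_mod_cast this
  · have := hU U hc
    simp only [Set.mem_ofPred_eq] at this
    exact_mod_cast this

lemma comp_perm_mem_Pmu {x : Fin n → ℝ} (hx : x ∈ Pmu n μ) (π : Equiv.Perm (Fin n)) :
    x ∘ π ∈ Pmu n μ := by
  have := LinearMap.image_convexHull (LinearMap.funLeft ℝ ℝ π) _ ▸ Set.mem_image_of_mem _ hx
  refine convexHull_mono ?_ this
  rintro _ ⟨_, ⟨σ, rfl⟩, rfl⟩
  exact ⟨π.trans σ, rfl⟩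

/-- The vector is a convex combination of `x` and `x ∘ Equiv.swap P Q`. -/
lemma sub_single_add_single_mem_Pmu {x : Fin n → ℝ} (hx : x ∈ Pmu n μ) {P Q : Fin n}
    (hPQ : P ≠ Q) {d : ℝ} (hd : 0 ≤ d) (hdx : d ≤ x P - x Q) :
    x - Pi.single P d + Pi.single Q d ∈ Pmu n μ := by
  rcases hd.eq_or_lt with rfl | hd
  · simpa using hx
  have hgap : 0 < x P - x Q := hd.trans_le hdx
  set s := d / (x P - x Q)
  have hs : s ≤ 1 := (div_le_one hgap).mpr hdx
  have hcomb : x - Pi.single P d + Pi.single Q d = (1 - s) • x + s • (x ∘ Equiv.swap P Q) := by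
    funext t
    have hd' : d = s * (x P - x Q) := (div_mul_cancel₀ d hgap.ne').symm
    rcases eq_or_ne t P with rfl | htP
    · simp [hPQ, hd']
      ring
    rcases eq_or_ne t Q with rfl | htQ
    · simp [hPQ.symm, hd']
      ring
    · simp [htP, htQ, Equiv.swap_apply_of_ne_of_ne htP htQ]
      ring
  rw [hcomb]
  exact convex_convexHull ℝ _ hx (comp_perm_mem_Pmu hx _) (by linarith) (div_nonneg hd.le hgap.le)
    (by ring)

lemma topSum_succ_val (μ : Fin n → ℤ) (t : Fin n) : topSum μ (t + 1) = topSum μ t + μ t := by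
  rw [topSum_succ, entry_val]

lemma eq_of_topSum_eq (h : ∀ k ≤ n, topSum c k = topSum μ k) : c = μ := by
  funext t
  have := topSum_succ_val c t
  have := topSum_succ_val μ t
  have := h t t.isLt.le
  have := h (t + 1) t.isLt
  omega

lemma antitone_add_single_sub_single (hc : Antitone c) {P Q : Fin n} (hPQ : P < Q)
    (hP : ∀ i < P, c P < c i) (hQ : ∀ i, Q < i → c i < c Q) :
    Antitone (c + Pi.single P 1 - Pi.single Q 1) := by
  intro i j hij
  rcases hij.eq_or_lt with rfl | hlt
  · exact le_rfl
  have hcij := hc hij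
  simp only [Pi.add_apply, Pi.sub_apply, Pi.single_apply]
  by_cases hjP : j = P
  · subst hjP
    have := hP i hlt
    simp only [hlt.ne, (hlt.trans hPQ).ne, hPQ.ne, if_true, if_false]
    omega
  by_cases hiQ : i = Q
  · subst hiQ
    have := hQ j hlt
    simp only [hlt.ne', (hPQ.trans hlt).ne', hPQ.ne', if_true, if_false]
    omega
  · simp only [hjP, hiQ, if_false]
    split_ifs <;> omega

lemma exists_first_deficit_run {f g : ℕ → ℤ} {N : ℕ} (hle : ∀ k ≤ N, f k ≤ g k)
    (h0 : f 0 = g 0) (hN : f N = g N) (hlt : ∃ k ≤ N, f k < g k) :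
    ∃ u v, 0 < u ∧ u < v ∧ v ≤ N ∧ (∀ k < u, f k = g k) ∧
      (∀ k, u ≤ k → k < v → f k < g k) ∧ f v = g v := by
  classical
  obtain ⟨huN, hu⟩ := Nat.find_spec hlt
  have hv : ∃ k, Nat.find hlt ≤ k ∧ f k = g k := ⟨N, huN, hN⟩
  obtain ⟨huv, hveq⟩ := Nat.find_spec hv
  have hvN : Nat.find hv ≤ N := Nat.find_min' hv ⟨huN, hN⟩
  refine ⟨Nat.find hlt, Nat.find hv, Nat.pos_of_ne_zero fun h => ?_,
    huv.lt_of_ne fun h => ?_, hvN, fun k hk => ?_, fun k hk hkv => ?_, hveq⟩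
  · rw [h] at hu
    omega
  · rw [h] at hu
    omega
  · exact (hle k (by omega)).antisymm (not_lt.mp fun h => Nat.find_min hlt hk ⟨by omega, h⟩)
  · exact (hle k (by omega)).lt_of_ne fun h => Nat.find_min hv hkv ⟨hk, h⟩

/-- Take `P = u - 1` and `Q = v - 1` for the first run `[u, v)` of strict prefix inequalities:
then `c P < μ P` and `μ Q < c Q`, and moving a unit from `Q` to `P` keeps `c` antitone. -/
lemma exists_transfer (hμ : Antitone μ) (hc : Antitone c) (hsum : topSum c n = topSum μ n)
    (hle : ∀ k ≤ n, topSum c k ≤ topSum μ k) (hlt : ∃ k ≤ n, topSum c k < topSum μ k) :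
    ∃ P Q : Fin n, P < Q ∧ Antitone (c + Pi.single P 1 - Pi.single Q 1) ∧
      ∀ k, (P : ℕ) < k → k ≤ Q → topSum c k < topSum μ k := by
  obtain ⟨u, v, hu0, huv, hvn, hbelow, hbetween, hveq⟩ :=
    exists_first_deficit_run hle rfl hsum hlt
  set P : Fin n := ⟨u - 1, by omega⟩
  set Q : Fin n := ⟨v - 1, by omega⟩
  have hPu : (P : ℕ) + 1 = u := by simp only [P]; omega
  have hQv : (Q : ℕ) + 1 = v := by simp only [Q]; omega
  have hcP : c P < μ P := by
    have := hbetween u le_rfl huv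
    have := hbelow P (by omega)
    rw [← hPu, topSum_succ_val, topSum_succ_val] at *
    omega
  have hcQ : μ Q < c Q := by
    have := hbetween Q (by omega) (by omega)
    rw [← hQv, topSum_succ_val, topSum_succ_val] at hveq
    omega
  refine ⟨P, Q, Fin.mk_lt_mk.mpr (by omega), antitone_add_single_sub_single hc
    (Fin.mk_lt_mk.mpr (by omega)) (fun i hi => ?_) (fun i hi => ?_),
    fun k hk hkQ => hbetween k (by omega) (by omega)⟩
  · rw [Fin.lt_def] at hi
    have := hbelow i (by omega)
    have := hbelow (i + 1) (by omega)
    rw [topSum_succ_val, topSum_succ_val] at this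
    have hci : c i = μ i := by omega
    exact hci ▸ hcP.trans_le (hμ (Fin.le_def.mpr hi.le))
  · rw [Fin.lt_def] at hi
    set V : Fin n := ⟨v, by omega⟩
    have hcV : c V ≤ μ V := by
      have := hle (V + 1) V.isLt
      rw [topSum_succ_val, topSum_succ_val, show (V : ℕ) = v from rfl, hveq] at this
      omega
    calc c i ≤ c V := hc (Fin.le_def.mpr (by simp only [V]; omega))
      _ ≤ μ V := hcV
      _ ≤ μ Q := hμ (Fin.le_def.mpr (by simp only [V]; omega))
      _ < c Q := hcQ

lemma topSum_add_single_sub_single (c : Fin n → ℤ) {P Q : Fin n} (hPQ : P < Q) (k : ℕ) :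
    topSum (c + Pi.single P 1 - Pi.single Q 1) k =
      topSum c k + if (P : ℕ) < k ∧ k ≤ Q then 1 else 0 := by
  rw [topSum_sub, topSum_add, topSum_single, topSum_single]
  have : (P : ℕ) < Q := hPQ
  split_ifs <;> omega

def defect (c μ : Fin n → ℤ) : ℕ := ∑ k ∈ range (n + 1), (topSum μ k - topSum c k).toNat

lemma defect_lt {c' : Fin n → ℤ} (hle : ∀ k ≤ n, topSum c k ≤ topSum c' k)
    (hle' : ∀ k ≤ n, topSum c' k ≤ topSum μ k) {k₀ : ℕ} (hk₀ : k₀ ≤ n)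
    (hlt : topSum c k₀ < topSum c' k₀) : defect c' μ < defect c μ := by
  refine sum_lt_sum (fun k hk => ?_) ⟨k₀, mem_range.mpr (by omega), ?_⟩
  · have := hle k (by rw [mem_range] at hk; omega)
    omega
  · have := hle' k₀ hk₀
    omega

theorem inPmu_of_antitone_of_topSum_le (hμ : Antitone μ) (hc : Antitone c)
    (hsum : topSum c n = topSum μ n) (hle : ∀ k ≤ n, topSum c k ≤ topSum μ k) :
    inPmu n μ c := by
  induction h : defect c μ using Nat.strong_induction_on generalizing c with
  | _ D ih =>
  by_cases hlt : ∃ k ≤ n, topSum c k < topSum μ k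
  · obtain ⟨P, Q, hPQ, hanti, hgap⟩ := exists_transfer hμ hc hsum hle hlt
    have htop := topSum_add_single_sub_single c hPQ
    have hQn : (Q : ℕ) < n := Q.isLt
    have hle' (k : ℕ) (hk : k ≤ n) :
        topSum (c + Pi.single P 1 - Pi.single Q 1) k ≤ topSum μ k := by
      have := hle k hk
      have := hgap k
      rw [htop]
      split_ifs with hk'
      · have := this hk'.1 hk'.2
        omega
      · omega
    have hc' : inPmu n μ (c + Pi.single P 1 - Pi.single Q 1) := by
      refine ih _ (h ▸ defect_lt (fun k _ => ?_) hle' hQn.le ?_) hanti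
        (by rw [htop, if_neg (by omega), hsum, add_zero]) hle' rfl
      · rw [htop]
        split_ifs <;> omega
      · rw [htop, if_pos ⟨hPQ, le_rfl⟩]
        omega
    have hcPQ : (c Q : ℝ) ≤ c P := by exact_mod_cast hc hPQ.le
    have hmove := sub_single_add_single_mem_Pmu hc' hPQ.ne zero_le_one (by
      simp only [Pi.add_apply, Pi.sub_apply, Pi.single_eq_same, Pi.single_eq_of_ne hPQ.ne,
        Pi.single_eq_of_ne hPQ.ne']
      push_cast
      linarith)
    show (fun t => (c t : ℝ)) ∈ Pmu n μ
    convert hmove using 1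
    funext t
    simp only [Pi.add_apply, Pi.sub_apply, Pi.single_apply]
    split_ifs <;> push_cast <;> ring
  · push Not at hlt
    obtain rfl := eq_of_topSum_eq fun k hk => (hle k hk).antisymm (hlt k hk)
    exact subset_convexHull ℝ _ ⟨1, rfl⟩

theorem inPmu_of_isMajorizedBy (hμ : Antitone μ) (hc : IsMajorizedBy c μ) : inPmu n μ c := by
  set σ := Tuple.sort fun t => -c t
  have hsorted : Antitone (c ∘ σ) := fun i j hij => by
    simpa using Tuple.monotone_sort (fun t => -c t) hij
  have hcσ : inPmu n μ (c ∘ σ) := by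
    refine inPmu_of_antitone_of_topSum_le hμ hsorted ?_ fun k hk => ?_
    · rw [topSum_self, topSum_self, ← hc.1]
      exact Equiv.sum_comp σ c
    · have := hc.2 ((initialSegment n k).map σ.toEmbedding)
      rwa [sum_map, card_map, card_initialSegment hk, ← topSum_eq_sum_initialSegment _ hk]
        at this
  simpa [inPmu, Function.comp_def] using comp_perm_mem_Pmu hcσ σ.symm

end Majorization

section Exchange

variable {μ a : Fin n → ℤ}

def charVec (S : Finset (Fin n)) : Fin n → ℤ := fun t => if t ∈ S then 1 else 0

lemma sum_charVec (U S : Finset (Fin n)) : ∑ t ∈ U, charVec S t = #(U ∩ S) := by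
  simp [charVec]

lemma sum_charVec_singleton (U : Finset (Fin n)) (s : Fin n) :
    ∑ t ∈ U, charVec {s} t = if s ∈ U then 1 else 0 := by
  simp [charVec]

lemma charVec_insert {s : Fin n} {S : Finset (Fin n)} (hs : s ∉ S) :
    charVec (insert s S) = charVec S + charVec {s} := by
  funext t
  by_cases ht : t = s
  · subst ht
    simp [charVec, hs]
  · simp [charVec, ht]

lemma charVec_sdiff {S' S : Finset (Fin n)} (h : S' ⊆ S) :
    charVec (S \ S') = charVec S - charVec S' := by
  funext t
  by_cases ht : t ∈ S'
  · simp [charVec, ht, h ht]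
  · simp [charVec, ht]

lemma IsMajorizedBy.card_eq (ha : IsMajorizedBy a μ) {S T : Finset (Fin n)}
    (hb : IsMajorizedBy (a + charVec S - charVec T) μ) : #S = #T := by
  have := hb.1
  simp only [Pi.add_apply, Pi.sub_apply, sum_sub_distrib, sum_add_distrib, sum_charVec,
    univ_inter, ha.1] at this
  omega

lemma IsMajorizedBy.exists_tight_of_not (ha : IsMajorizedBy a μ) {s t₀ : Fin n}
    (h : ¬ IsMajorizedBy (a + charVec {s} - charVec {t₀}) μ) :
    ∃ U : Finset (Fin n), s ∈ U ∧ t₀ ∉ U ∧ ∑ t ∈ U, a t = topSum μ #U := by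
  have hsum : ∑ t, (a + charVec {s} - charVec {t₀}) t = ∑ t, μ t := by
    simp [sum_sub_distrib, sum_add_distrib, sum_charVec_singleton, ha.1]
  obtain ⟨U, hU⟩ := not_forall.mp fun hU => h ⟨hsum, hU⟩
  simp only [Pi.add_apply, Pi.sub_apply, sum_sub_distrib, sum_add_distrib,
    sum_charVec_singleton, not_le] at hU
  have := ha.2 U
  refine ⟨U, ?_, ?_, ?_⟩ <;> split_ifs at hU <;> first | assumption | omega

lemma IsMajorizedBy.exists_exchange (hμ : Antitone μ) (ha : IsMajorizedBy a μ)
    {S T : Finset (Fin n)} (hb : IsMajorizedBy (a + charVec S - charVec T) μ) {t₀ : Fin n}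
    (ht₀ : t₀ ∈ T) : ∃ s ∈ S, IsMajorizedBy (a + charVec {s} - charVec {t₀}) μ := by
  by_contra! hno
  choose f hf using fun s (hs : s ∈ S) => ha.exists_tight_of_not (hno s hs)
  -- `U` is tight for `a`, contains `S` and avoids `t₀`, so `b` exceeds `topSum μ #U` on `U`
  set U := S.attach.sup fun s => f s s.2
  have hU : t₀ ∉ U ∧ ∑ t ∈ U, a t = topSum μ #U := by
    refine sup_induction (p := fun V => t₀ ∉ V ∧ ∑ t ∈ V, a t = topSum μ #V)
      ⟨notMem_empty _, by simp [topSum]⟩ (fun V hV W hW => ?_)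
      fun s _ => ⟨(hf s s.2).2.1, (hf s s.2).2.2⟩
    exact ⟨by simp [hV.1, hW.1], ha.sum_union_eq_topSum hμ hV.2 hW.2⟩
  have hSU : S ⊆ U := fun s hs =>
    le_sup (f := fun s : S => f s s.2) (mem_attach S ⟨s, hs⟩) (hf s hs).1
  have hTU : #(U ∩ T) < #T :=
    card_lt_card ⟨inter_subset_right, fun h => hU.1 (mem_of_mem_inter_left (h ht₀))⟩
  have := hb.2 U
  simp only [Pi.add_apply, Pi.sub_apply, sum_sub_distrib, sum_add_distrib, sum_charVec,
    inter_eq_right.mpr hSU, hU.2, ha.card_eq hb] at this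
  omega

lemma IsMajorizedBy.exists_subset_of_subset (hμ : Antitone μ) (ha : IsMajorizedBy a μ)
    {S T : Finset (Fin n)} (hb : IsMajorizedBy (a + charVec S - charVec T) μ)
    {T' : Finset (Fin n)} (hT' : T' ⊆ T) :
    ∃ S' ⊆ S, IsMajorizedBy (a + charVec S' - charVec T') μ := by
  induction T' using Finset.induction_on with
  | empty => exact ⟨∅, empty_subset S, by simpa [charVec] using ha⟩
  | insert t₀ T'' ht₀ ih =>
    obtain ⟨S'', hS'', hc⟩ := ih ((subset_insert t₀ T'').trans hT')
    have hb' : IsMajorizedBy (a + charVec S'' - charVec T'' + charVec (S \ S'')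
        - charVec (T \ T'')) μ := by
      rw [charVec_sdiff hS'', charVec_sdiff ((subset_insert t₀ T'').trans hT')]
      convert hb using 1
      abel
    obtain ⟨s, hs, hmaj⟩ := hc.exists_exchange hμ hb'
      (mem_sdiff.mpr ⟨hT' (mem_insert_self t₀ T''), ht₀⟩)
    rw [mem_sdiff] at hs
    refine ⟨insert s S'', insert_subset hs.1 hS'', ?_⟩
    rw [charVec_insert hs.2, charVec_insert ht₀]
    convert hmaj using 1
    abel

end Exchange

section Omega

def window (n : ℕ) (j : ℤ) (k : ℕ) : Finset (Fin n) := {t | ((t : ℤ) - j) % n < k}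

lemma card_window (hn : 0 < n) (j : ℤ) {k : ℕ} (hk : k ≤ n) : #(window n j k) = k := by
  have hn' : (0 : ℤ) < n := by exact_mod_cast hn
  have hmod (x : ℤ) : 0 ≤ x % n ∧ x % n < n := ⟨Int.emod_nonneg _ hn'.ne', Int.emod_lt_of_pos _ hn'⟩
  calc #(window n j k) = #(range k) := ?_
    _ = k := card_range k
  refine card_nbij' (fun t => (((t : ℤ) - j) % n).toNat)
    (fun l => ⟨((j + l) % n).toNat, by have := hmod (j + l); omega⟩) ?_ ?_ ?_ ?_
  · intro t ht
    simp only [window, coe_filter, mem_univ, true_and, Set.mem_ofPred_eq, coe_range,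
      Set.mem_Iio] at ht ⊢
    have := hmod ((t : ℤ) - j)
    omega
  · intro l hl
    simp only [window, coe_filter, mem_univ, true_and, Set.mem_ofPred_eq, coe_range,
      Set.mem_Iio] at hl ⊢
    rw [Int.toNat_of_nonneg (hmod _).1, Int.emod_sub_emod, add_sub_cancel_left,
      Int.emod_eq_of_lt (by omega) (by omega)]
    omega
  · intro t _
    ext
    simp only
    rw [Int.toNat_of_nonneg (hmod _).1, Int.add_emod_emod, add_sub_cancel,
      Int.emod_eq_of_lt (by omega) (by omega)]
    simp
  · intro l hl
    simp only [coe_range, Set.mem_Iio] at hl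
    simp only
    rw [Int.toNat_of_nonneg (hmod _).1, Int.emod_sub_emod, add_sub_cancel_left,
      Int.emod_eq_of_lt (by omega) (by omega)]
    simp

lemma window_mono (j : ℤ) {k l : ℕ} (hkl : k ≤ l) : window n j k ⊆ window n j l := by
  intro t
  simp only [window, mem_filter, mem_univ, true_and]
  omega

lemma omegaVec_eq (hn : 0 < n) (i : ℤ) (t : Fin n) :
    omegaVec n i t = (i - ((t : ℤ) + 1)) / n + 1 := by
  rw [omegaVec, Int.fdiv_eq_ediv_of_nonneg _ (by positivity)]

lemma omegaVec_add_mul (hn : 0 < n) (i k : ℤ) (t : Fin n) :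
    omegaVec n (i + k * n) t = omegaVec n i t + k := by
  rw [omegaVec_eq hn, omegaVec_eq hn, show i + k * n - ((t : ℤ) + 1) = i - (t + 1) + k * n by ring,
    Int.add_mul_ediv_right _ _ (by omega)]
  ring

/-- Walking from `j` to `j + k` raises `ω` by one exactly in the `k` coordinates congruent to
`j, j + 1, …, j + k - 1` modulo `n`. -/
lemma omegaVec_add_natCast (hn : 0 < n) (j : ℤ) {k : ℕ} (hk : k ≤ n) :
    omegaVec n (j + k) = omegaVec n j + charVec (window n j k) := by
  have hn' : (0 : ℤ) < n := by exact_mod_cast hn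
  funext t
  simp only [omegaVec_eq hn, Pi.add_apply, charVec, window, mem_filter, mem_univ, true_and]
  set x := j - ((t : ℤ) + 1) with hxdef
  have hx := Int.mul_ediv_add_emod x n
  have hr := Int.emod_nonneg x hn'.ne'
  have hrn := Int.emod_lt_of_pos x hn'
  have htj : ((t : ℤ) - j) % n = n - 1 - x % n :=
    ((Int.ediv_emod_unique (q := -(x / n) - 1) hn').mpr
      ⟨by linear_combination -hx - hxdef, by omega, by omega⟩).2
  rw [htj, show j + k - ((t : ℤ) + 1) = x + k by simp only [x]; ring]
  split_ifs with h
  · have : (x + k) / n = x / n + 1 :=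
      ((Int.ediv_emod_unique (r := x % n + k - n) hn').mpr
        ⟨by linear_combination hx, by omega, by omega⟩).1
    omega
  · have : (x + k) / n = x / n :=
      ((Int.ediv_emod_unique (r := x % n + k) hn').mpr
        ⟨by linear_combination hx, by omega, by omega⟩).1
    omega

end Omega

section Faces

variable {J : Set ℤ} {w : ℤ → Fin n → ℤ}

lemma IsPeriodic.add_mul_mem_iff (hJ : IsPeriodic n J) (x k : ℤ) : x + k * n ∈ J ↔ x ∈ J := by
  induction k using Int.induction_on with
  | zero => simp
  | succ k ih => rw [← ih, hJ (x + k * n)]; ring_nf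
  | pred k ih => rw [← ih, hJ (x + (-k - 1) * n)]; ring_nf

lemma IsFace.add_mul (hJ : IsPeriodic n J) (hw : IsFace n J w) {j : ℤ} (hj : j ∈ J) (k : ℤ)
    (t : Fin n) : w (j + k * n) t = w j t + k := by
  induction k using Int.induction_on with
  | zero => simp
  | succ k ih =>
    rw [show j + (k + 1) * n = j + k * n + n by ring,
      hw.1 _ ((IsPeriodic.add_mul_mem_iff hJ j k).mpr hj) t, ih]
    ring
  | pred k ih =>
    have := hw.1 _ ((IsPeriodic.add_mul_mem_iff hJ j (-k - 1)).mpr hj) t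
    rw [show j + (-k - 1) * n + n = j + -k * n by ring, ih] at this
    linarith

lemma IsFace.mono {I : Set ℤ} (hw : IsFace n I w) (hJI : J ⊆ I) : IsFace n J w :=
  ⟨fun i hi => hw.1 i (hJI hi), fun i hi j hj => hw.2.1 i (hJI hi) j (hJI hj),
    fun i hi j hj => hw.2.2 i (hJI hi) j (hJI hj)⟩

lemma IsPeriodic.exists_gap (hn : 0 < n) (hJ : IsPeriodic n J) (hJne : J.Nonempty) {i : ℤ}
    (hi : i ∉ J) : ∃ p ∈ J, ∃ q ∈ J, p < i ∧ i < q ∧ q ≤ p + n ∧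
      (∀ x ∈ J, x ≤ i → x ≤ p) ∧ ∀ x ∈ J, i ≤ x → q ≤ x := by
  obtain ⟨j, hj⟩ := hJne
  have hm : |j - i| ≤ |j - i| * n := le_mul_of_one_le_right (abs_nonneg _) (by exact_mod_cast hn)
  have := le_abs_self (j - i)
  have := neg_abs_le (j - i)
  obtain ⟨p, ⟨hpJ, hpi⟩, hpmax⟩ := Int.exists_greatest_of_bdd (P := fun x => x ∈ J ∧ x ≤ i)
    ⟨i, fun _ h => h.2⟩
    ⟨j + -|j - i| * n, (IsPeriodic.add_mul_mem_iff hJ _ _).mpr hj, by linarith⟩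
  obtain ⟨q, ⟨hqJ, hiq⟩, hqmin⟩ := Int.exists_least_of_bdd (P := fun x => x ∈ J ∧ i ≤ x)
    ⟨i, fun _ h => h.2⟩
    ⟨j + |j - i| * n, (IsPeriodic.add_mul_mem_iff hJ _ _).mpr hj, by linarith⟩
  have hpn : p + n ∈ J := (hJ p).mp hpJ
  have hne (x : ℤ) (hx : x ∈ J) : x ≠ i := fun h => hi (h ▸ hx)
  have hn' : (0 : ℤ) < n := by exact_mod_cast hn
  refine ⟨p, hpJ, q, hqJ, hpi.lt_of_ne (hne p hpJ), hiq.lt_of_ne' (hne q hqJ),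
    hqmin _ ⟨hpn, ?_⟩, fun x hx h => hpmax x ⟨hx, h⟩, fun x hx h => hqmin x ⟨hx, h⟩⟩
  by_contra! h
  have := hpmax _ ⟨hpn, h.le⟩
  omega

lemma IsFace.le_add_of_le_add_mul (hJ : IsPeriodic n J) (hw : IsFace n J w) {p i : ℤ}
    (hp : p ∈ J) (hpmax : ∀ x ∈ J, x ≤ i → x ≤ p) {x : ℤ} (hx : x ∈ J) {k : ℤ}
    (hxk : x ≤ i + k * n) (t : Fin n) : w x t ≤ w p t + k := by
  have hx' := (IsPeriodic.add_mul_mem_iff hJ x (-k)).mpr hx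
  have := IsFace.add_mul hJ hw hx' k t
  rw [show x + -k * n + k * n = x by ring] at this
  linarith [hw.2.1 _ hx' p hp (hpmax _ hx' (by linarith)) t]

lemma IsFace.add_le_of_add_mul_le (hJ : IsPeriodic n J) (hw : IsFace n J w) {q i : ℤ}
    (hq : q ∈ J) (hqmin : ∀ x ∈ J, i ≤ x → q ≤ x) {y : ℤ} (hy : y ∈ J) {k : ℤ}
    (hky : i + k * n ≤ y) (t : Fin n) : w q t + k ≤ w y t := by
  have hy' := (IsPeriodic.add_mul_mem_iff hJ y (-k)).mpr hy
  have := IsFace.add_mul hJ hw hy' k t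
  rw [show y + -k * n + k * n = y by ring] at this
  linarith [hw.2.1 q hq _ hy' (hqmin _ hy' (by linarith)) t]

def insertOrbit (n : ℕ) (w : ℤ → Fin n → ℤ) (i : ℤ) (v : Fin n → ℤ) : ℤ → Fin n → ℤ :=
  fun x t => if (n : ℤ) ∣ x - i then v t + (x - i) / n else w x t

lemma insertOrbit_add_mul (hn : 0 < n) (w : ℤ → Fin n → ℤ) (i : ℤ) (v : Fin n → ℤ) (k : ℤ)
    (t : Fin n) : insertOrbit n w i v (i + k * n) t = v t + k := by
  simp [insertOrbit, hn.ne']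

lemma insertOrbit_of_mem (hJ : IsPeriodic n J) {i : ℤ} (hi : i ∉ J) (v : Fin n → ℤ) {x : ℤ}
    (hx : x ∈ J) : insertOrbit n w i v x = w x := by
  funext t
  refine if_neg fun ⟨k, hk⟩ => hi ?_
  rw [show i = x + -k * n by linarith]
  exact (IsPeriodic.add_mul_mem_iff hJ x (-k)).mpr hx

lemma isFace_insertOrbit (hn : 0 < n) (hJ : IsPeriodic n J) (hw : IsFace n J w) {p q i : ℤ}
    (hi : i ∉ J) (hp : p ∈ J) (hq : q ∈ J) (hpmax : ∀ x ∈ J, x ≤ i → x ≤ p)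
    (hqmin : ∀ x ∈ J, i ≤ x → q ≤ x) {v : Fin n → ℤ} (hpv : w p ≤ v) (hvq : v ≤ w q)
    (hv : ∑ t, v t = ∑ t, w p t + (i - p)) :
    IsFace n (J ∪ Set.range fun k : ℤ => i + k * n) (insertOrbit n w i v) := by
  have hJw (x : ℤ) (hx : x ∈ J) := insertOrbit_of_mem (w := w) hJ hi v hx
  refine ⟨?_, ?_, ?_⟩
  · rintro x (hx | ⟨k, rfl⟩) t
    · rw [hJw _ ((hJ x).mp hx), hJw x hx, hw.1 x hx t]
    · rw [show i + k * n + n = i + (k + 1) * n by ring, insertOrbit_add_mul hn,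
        insertOrbit_add_mul hn]
      ring
  · rintro x (hx | ⟨k, rfl⟩) y (hy | ⟨l, rfl⟩) hxy t
    · rw [hJw x hx, hJw y hy]
      exact hw.2.1 x hx y hy hxy t
    · rw [hJw x hx, insertOrbit_add_mul hn]
      linarith [hpv t, IsFace.le_add_of_le_add_mul hJ hw hp hpmax hx hxy t]
    · rw [hJw y hy, insertOrbit_add_mul hn]
      linarith [hvq t, IsFace.add_le_of_add_mul_le hJ hw hq hqmin hy hxy t]
    · rw [insertOrbit_add_mul hn, insertOrbit_add_mul hn]
      have := le_of_mul_le_mul_right (by linarith : k * n ≤ l * n) (by positivity : (0 : ℤ) < n)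
      linarith
  · have hconst : ∀ x ∈ J ∪ Set.range fun k : ℤ => i + k * n,
        ∑ t, insertOrbit n w i v x t - x = ∑ t, w p t - p := by
      rintro x (hx | ⟨k, rfl⟩)
      · rw [hJw x hx]
        linarith [hw.2.2 p hp x hx]
      · simp only [insertOrbit_add_mul hn, sum_add_distrib, sum_const, card_univ,
          Fintype.card_fin, nsmul_eq_mul]
        linarith
    intro x hx y hy
    linarith [hconst x hx, hconst y hy]

end Faces

section Extension

variable {μ : Fin n → ℤ} {J : Set ℤ} {w : ℤ → Fin n → ℤ}

def IsPermFace (n : ℕ) (μ : Fin n → ℤ) (J : Set ℤ) (w : ℤ → Fin n → ℤ) : Prop :=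
  IsFace n J w ∧ ∀ j ∈ J, inPmu n μ (fun t => w j t - omegaVec n j t)

lemma exists_intermediate_vertex (hn : 0 < n) (hμ : Antitone μ) {p : ℤ} {k m : ℕ}
    (hkm : k ≤ m) (hmn : m ≤ n) {w₀ w₁ : Fin n → ℤ} (h₀₁ : w₀ ≤ w₁) (h₁₀ : w₁ ≤ w₀ + 1)
    (h₀ : inPmu n μ (w₀ - omegaVec n p)) (h₁ : inPmu n μ (w₁ - omegaVec n (p + m))) :
    ∃ v, w₀ ≤ v ∧ v ≤ w₁ ∧ ∑ t, v t = ∑ t, w₀ t + k ∧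
      inPmu n μ (v - omegaVec n (p + k)) := by
  classical
  set S : Finset (Fin n) := {t | w₀ t < w₁ t}
  have hw₁ : w₁ = w₀ + charVec S := by
    funext t
    have := h₀₁ t
    have := h₁₀ t
    simp only [Pi.add_apply, Pi.one_apply, charVec, S, mem_filter, mem_univ, true_and] at *
    split_ifs <;> omega
  have ha := isMajorizedBy_of_inPmu hμ h₀
  have hb : IsMajorizedBy (w₀ - omegaVec n p + charVec S - charVec (window n p m)) μ := by
    have := isMajorizedBy_of_inPmu hμ h₁
    rw [hw₁, omegaVec_add_natCast hn p hmn] at this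
    convert this using 1
    abel
  obtain ⟨S', hS'S, hS'⟩ := ha.exists_subset_of_subset hμ hb (window_mono p hkm)
  have hcard : #S' = k := (ha.card_eq hS').trans (card_window hn p (hkm.trans hmn))
  have hχ : 0 ≤ charVec S' := fun t => by simp only [charVec, Pi.zero_apply]; split_ifs <;> omega
  refine ⟨w₀ + charVec S', le_add_of_nonneg_right hχ, ?_, ?_, ?_⟩
  · rw [hw₁]
    refine add_le_add le_rfl fun t => ?_
    by_cases ht : t ∈ S'
    · simp [charVec, ht, hS'S ht]
    · simp only [charVec, ht, if_false]
      split_ifs <;> omega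
  · simp [sum_add_distrib, sum_charVec, hcard]
  · rw [omegaVec_add_natCast hn p (hkm.trans hmn)]
    refine inPmu_of_isMajorizedBy hμ ?_
    convert hS' using 1
    abel

theorem IsPermFace.exists_extension (hn : 0 < n) (hμ : Antitone μ) (hJ : IsPeriodic n J)
    (hJne : J.Nonempty) (hw : IsPermFace n μ J w) {i : ℤ} (hi : i ∉ J) :
    ∃ w', IsPermFace n μ (J ∪ Set.range fun k : ℤ => i + k * n) w' ∧ ∀ j ∈ J, w' j = w j := by
  obtain ⟨p, hp, q, hq, hpi, hiq, hqp, hpmax, hqmin⟩ := IsPeriodic.exists_gap hn hJ hJne hi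
  obtain ⟨k, rfl⟩ : ∃ k : ℕ, i = p + k := ⟨(i - p).toNat, by omega⟩
  obtain ⟨m, rfl⟩ : ∃ m : ℕ, q = p + m := ⟨(q - p).toNat, by omega⟩
  have hpq (t : Fin n) : w (p + m) t ≤ w p t + 1 := by
    have := hw.1.2.1 _ hq _ ((hJ p).mp hp) (by omega) t
    rwa [hw.1.1 p hp t] at this
  obtain ⟨v, hpv, hvq, hv, hvperm⟩ := exists_intermediate_vertex hn hμ (k := k) (m := m)
    (by omega) (by omega) (fun t => hw.1.2.1 _ hp _ hq (by omega) t) hpq (hw.2 p hp) (hw.2 _ hq)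
  refine ⟨insertOrbit n w (p + k) v, ⟨isFace_insertOrbit hn hJ hw.1 hi hp hq hpmax hqmin hpv hvq
    (by rw [hv]; ring), ?_⟩, fun j hj => insertOrbit_of_mem hJ hi v hj⟩
  rintro x (hx | ⟨l, rfl⟩)
  · rw [insertOrbit_of_mem hJ hi v hx]
    exact hw.2 x hx
  · convert hvperm using 2 with t
    rw [insertOrbit_add_mul hn, omegaVec_add_mul hn, Pi.sub_apply]
    ring

lemma IsPeriodic.union_range (hJ : IsPeriodic n J) (i : ℤ) :
    IsPeriodic n (J ∪ Set.range fun k : ℤ => i + k * n) := by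
  intro x
  simp only [Set.mem_union, Set.mem_range, hJ x]
  exact or_congr_right ⟨fun ⟨k, hk⟩ => ⟨k + 1, by rw [← hk]; ring⟩,
    fun ⟨k, hk⟩ => ⟨k - 1, by linarith⟩⟩

lemma IsPeriodic.emod_mem_iff (hJ : IsPeriodic n J) (x : ℤ) : x % n ∈ J ↔ x ∈ J := by
  rw [← IsPeriodic.add_mul_mem_iff hJ (x % n) (x / n)]
  exact iff_of_eq (congrArg (· ∈ J) (by linarith [Int.mul_ediv_add_emod x n]))

/-- Induction on the number of residue classes modulo `n` missing from `J`. -/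
theorem IsPermFace.exists_extension_univ (hn : 0 < n) (hμ : Antitone μ) (hJ : IsPeriodic n J)
    (hJne : J.Nonempty) (hw : IsPermFace n μ J w) :
    ∃ v, IsPermFace n μ Set.univ v ∧ ∀ j ∈ J, v j = w j := by
  classical
  induction h : #((range n).filter fun r : ℕ => (r : ℤ) ∉ J) using Nat.strong_induction_on
    generalizing J w with
  | _ N ih =>
  by_cases hall : ∀ x, x ∈ J
  · exact ⟨w, Set.eq_univ_of_forall hall ▸ hw, fun _ _ => rfl⟩
  push Not at hall
  obtain ⟨i, hi⟩ := hall
  obtain ⟨w', hw', hw'w⟩ := hw.exists_extension hn hμ hJ hJne hi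
  have hJ' := IsPeriodic.union_range hJ i
  have hlt :
      #((range n).filter fun r : ℕ => (r : ℤ) ∉ J ∪ Set.range fun k : ℤ => i + k * n) < N := by
    have hn' : (0 : ℤ) < n := by exact_mod_cast hn
    have hr := Int.emod_nonneg i hn'.ne'
    have hrn := Int.emod_lt_of_pos i hn'
    rw [← h]
    refine card_lt_card <| (ssubset_iff_of_subset
      (monotone_filter_right _ fun r _ hr hr' => hr (Set.mem_union_left _ hr'))).mpr
      ⟨(i % n).toNat, mem_filter.mpr ⟨mem_range.mpr (by omega), ?_⟩,
        fun hmem => (mem_filter.mp hmem).2 ?_⟩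
    all_goals rw [Int.toNat_of_nonneg hr]
    · exact (IsPeriodic.emod_mem_iff hJ i).not.mpr hi
    · exact Set.mem_union_right _ ⟨-(i / n), by linarith [Int.mul_ediv_add_emod i n]⟩
  obtain ⟨v, hv, hvw'⟩ := ih _ hlt hJ' (hJne.mono Set.subset_union_left) hw' (by convert rfl)
  exact ⟨v, hv, fun j hj => (hvw' j (Set.mem_union_left _ hj)).trans (hw'w j hj)⟩

end Extension

end PermRestriction

open PermRestriction in
theorem perm_restriction_surjective_general (n : ℕ) (hn : 1 ≤ n)
    (μ : Fin n → ℤ) (hμ : ∀ i j : Fin n, i ≤ j → μ j ≤ μ i)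
    (I J : Set ℤ) (hJper : IsPeriodic n J) (hJne : J.Nonempty)
    (w : ℤ → Fin n → ℤ) (hw : IsFace n J w)
    (hwPerm : ∀ j ∈ J, inPmu n μ (fun t => w j t - omegaVec n j t)) :
    ∃ v : ℤ → Fin n → ℤ,
      IsFace n I v ∧
      (∀ i ∈ I, inPmu n μ (fun t => v i t - omegaVec n i t)) ∧
      (∀ j ∈ J, v j = w j) := by
  obtain ⟨v, hv, hvw⟩ :=
    IsPermFace.exists_extension_univ hn hμ hJper hJne ⟨hw, hwPerm⟩
  exact ⟨v, IsFace.mono hv.1 (Set.subset_univ I), fun i _ => hv.2 i trivial, hvw⟩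

/-- **Proposition.** For nonempty periodic subsets `J ⊆ I ⊆ ℤ` and a dominant coweight `μ`,
the restriction map `Perm_I(μ) → Perm_J(μ)` is surjective: every `μ`-permissible face of
type `J` extends to a `μ`-permissible face of type `I`. -/
theorem perm_restriction_surjective (n : ℕ) (hn : 1 ≤ n)
    (μ : Fin n → ℤ) (hμ : ∀ i j : Fin n, i ≤ j → μ j ≤ μ i)
    (I J : Set ℤ) (hJI : J ⊆ I)
    (hIper : IsPeriodic n I) (hJper : IsPeriodic n J)
    (hIne : I.Nonempty) (hJne : J.Nonempty)
    (w : ℤ → Fin n → ℤ) (hw : IsFace n J w)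
    (hwPerm : ∀ j ∈ J, inPmu n μ (fun t => w j t - omegaVec n j t)) :
    ∃ v : ℤ → Fin n → ℤ,
      IsFace n I v ∧
      (∀ i ∈ I, inPmu n μ (fun t => v i t - omegaVec n i t)) ∧
      (∀ j ∈ J, v j = w j) :=
  perm_restriction_surjective_general n hn μ hμ I J hJper hJne w hw hwPerm
end

section
/- Let n ≥ 1, let J ⊆ ℤ be a nonempty periodic subset, let k ∈ J with k+1 ∉ J, let l be the smallest element of J greater than k, and let I = J ∪ (k+1+nℤ). Fix a face (v_j)_{j∈J} of type J. Then the map sending a face (w_i)_{i∈I} of type I satisfying w_j = v_j for all j ∈ J to its component w_{k+1} is a bijection onto the set { w ∈ ℤ^n : v_k ≤ w ≤ v_l and Σ(w) = Σ(v_k) + 1 }. -/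
/-- A face of type `I`, given as a family indexed by the subtype `I`:
`v_{i+n} = v_i + (1,…,1)`, `v_i ≤ v_j` componentwise for `i ≤ j` in `I`, and
`Σ(v_j) - Σ(v_i) = j - i` for `i, j ∈ I`. -/
def IsFaceOn (n : ℕ) (I : Set ℤ) (v : I → Fin n → ℤ) : Prop :=
  (∀ i j : I, (j : ℤ) = (i : ℤ) + n → ∀ t, v j t = v i t + 1) ∧
  (∀ i j : I, (i : ℤ) ≤ (j : ℤ) → ∀ t, v i t ≤ v j t) ∧
  (∀ i j : I, (∑ t, v j t) - (∑ t, v i t) = (j : ℤ) - (i : ℤ))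

variable {n : ℕ} {J I : Set ℤ}

theorem IsPeriodic.add_mul_mem_iff (hJ : IsPeriodic n J) (i c : ℤ) : i + n * c ∈ J ↔ i ∈ J := by
  have hper : Function.Periodic (· ∈ J) (n : ℤ) := fun i => propext (hJ i).symm
  rw [mul_comm]
  exact Iff.of_eq (hper.int_mul c i)

theorem IsPeriodic.of_union_coset (hJ : IsPeriodic n J) (a : ℤ)
    (hI : ∀ m : ℤ, m ∈ I ↔ m ∈ J ∨ ∃ c : ℤ, m = a + n * c) : IsPeriodic n I := by
  intro m
  rw [hI, hI, ← hJ m]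
  refine or_congr_right ⟨?_, ?_⟩
  · rintro ⟨c, rfl⟩
    exact ⟨c + 1, by ring⟩
  · rintro ⟨c, hc⟩
    exact ⟨c - 1, by linarith⟩

theorem IsPeriodic.add_mul_le_of_lt {k l : ℤ} (hJ : IsPeriodic n J)
    (hlmin : ∀ m ∈ J, k < m → l ≤ m) {j : ℤ} (hj : j ∈ J) {c : ℤ} (hkj : k + n * c < j) :
    l + n * c ≤ j := by
  have hj' : j + n * (-c) ∈ J := (hJ.add_mul_mem_iff j (-c)).mpr hj
  have := hlmin _ hj' (by linarith)
  linarith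

namespace IsFaceOn

variable {v w w' : I → Fin n → ℤ}

theorem sum_eq_add (hv : IsFaceOn n I v) (i j : I) : ∑ t, v j t = ∑ t, v i t + (j - i) := by
  linarith [hv.2.2 i j]

theorem apply_eq_add_of_eq_add_mul (hI : IsPeriodic n I) (hv : IsFaceOn n I v) (c : ℤ) :
    ∀ i j : I, (j : ℤ) = i + n * c → ∀ t, v j t = v i t + c := by
  induction c using Int.induction_on with
  | zero =>
    intro i j hij t
    obtain rfl : i = j := Subtype.ext (by simpa using hij.symm)
    simp
  | succ m ih =>
    intro i j hij t
    have hprev : (j : ℤ) - n ∈ I := (hI _).mpr (by simp)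
    rw [hv.1 ⟨_, hprev⟩ j (by simp) t, ih i ⟨_, hprev⟩ (by simp only; linarith) t]
    ring
  | pred m ih =>
    intro i j hij t
    have hnext : (j : ℤ) + n ∈ I := (hI _).mp j.2
    have := hv.1 j ⟨_, hnext⟩ rfl t
    rw [ih i ⟨_, hnext⟩ (by simp only; linarith) t] at this
    linarith

theorem eq_of_eqOn_of_apply_eq {a : ℤ} (hI : IsPeriodic n I)
    (hcov : ∀ i ∈ I, i ∈ J ∨ ∃ c : ℤ, i = a + n * c) (ha : a ∈ I)
    (hw : IsFaceOn n I w) (hw' : IsFaceOn n I w') (hJ : ∀ i : I, (i : ℤ) ∈ J → w i = w' i)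
    (hwa : w ⟨a, ha⟩ = w' ⟨a, ha⟩) : w = w' := by
  funext i t
  rcases hcov i i.2 with hiJ | ⟨c, hc⟩
  · rw [hJ i hiJ]
  · rw [hw.apply_eq_add_of_eq_add_mul hI c ⟨a, ha⟩ i hc,
      hw'.apply_eq_add_of_eq_add_mul hI c ⟨a, ha⟩ i hc, hwa]

theorem apply_le_add_of_le {k : ℤ} {u : Fin n → ℤ} (hI : IsPeriodic n I) (hv : IsFaceOn n I v)
    (hk : k ∈ I) (hk1 : k + 1 ∉ I) (hku : ∀ t, v ⟨k, hk⟩ t ≤ u t) {i : I} {c : ℤ}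
    (hi : (i : ℤ) ≤ k + 1 + n * c) (t : Fin n) : v i t ≤ u t + c := by
  have hne : (i : ℤ) ≠ k + 1 + n * c := fun h => hk1 ((hI.add_mul_mem_iff _ c).mp (h ▸ i.2))
  have hkc : k + n * c ∈ I := (hI.add_mul_mem_iff k c).mpr hk
  calc v i t ≤ v ⟨k + n * c, hkc⟩ t := hv.2.1 _ _ (by simp only; omega) t
    _ = v ⟨k, hk⟩ t + c := hv.apply_eq_add_of_eq_add_mul hI c _ _ rfl t
    _ ≤ u t + c := by linarith [hku t]

theorem add_le_apply_of_le {k l : ℤ} {u : Fin n → ℤ} (hI : IsPeriodic n I) (hv : IsFaceOn n I v)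
    (hl : l ∈ I) (hlmin : ∀ m ∈ I, k < m → l ≤ m) (hul : ∀ t, u t ≤ v ⟨l, hl⟩ t) {j : I}
    {c : ℤ} (hj : k + 1 + n * c ≤ j) (t : Fin n) : u t + c ≤ v j t := by
  have hlc : l + n * c ∈ I := (hI.add_mul_mem_iff l c).mpr hl
  calc u t + c ≤ v ⟨l, hl⟩ t + c := by linarith [hul t]
    _ = v ⟨l + n * c, hlc⟩ t := (hv.apply_eq_add_of_eq_add_mul hI c _ _ rfl t).symm
    _ ≤ v j t := hv.2.1 _ _ (hI.add_mul_le_of_lt hlmin j.2 (by omega)) t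

end IsFaceOn

open Classical in
/-- Equal to `v` on `J` and to `u + c` at `a + n * c ∉ J`; its other values are irrelevant. -/
noncomputable def extendAlongCoset (n : ℕ) (J : Set ℤ) (v : J → Fin n → ℤ) (a : ℤ)
    (u : Fin n → ℤ) (i : ℤ) : Fin n → ℤ :=
  if h : i ∈ J then v ⟨i, h⟩ else fun t => u t + (i - a) / n

section Extension

variable {v : J → Fin n → ℤ} {a : ℤ} {u : Fin n → ℤ}

theorem extendAlongCoset_of_mem {i : ℤ} (hi : i ∈ J) :
    extendAlongCoset n J v a u i = v ⟨i, hi⟩ :=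
  dif_pos hi

theorem extendAlongCoset_add_mul (hn : n ≠ 0) {c : ℤ} (hc : a + n * c ∉ J) (t : Fin n) :
    extendAlongCoset n J v a u (a + n * c) t = u t + c := by
  simp [extendAlongCoset, hc, Int.mul_ediv_cancel_left _ (Int.natCast_ne_zero.mpr hn)]

theorem extendAlongCoset_self (ha : a ∉ J) : extendAlongCoset n J v a u a = u := by
  simp [extendAlongCoset, ha]

variable {k l : ℤ}

theorem extendAlongCoset_add_period (hn : n ≠ 0) (hJ : IsPeriodic n J) (hv : IsFaceOn n J v)
    (hk1 : k + 1 ∉ J) (hI : ∀ m : ℤ, m ∈ I ↔ m ∈ J ∨ ∃ c : ℤ, m = k + 1 + n * c)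
    (i j : I) (hij : (j : ℤ) = i + n) (t : Fin n) :
    extendAlongCoset n J v (k + 1) u j t = extendAlongCoset n J v (k + 1) u i t + 1 := by
  rcases (hI i).mp i.2 with hiJ | ⟨c, hc⟩
  · have hjJ : (j : ℤ) ∈ J := hij ▸ (hJ i).mp hiJ
    rw [extendAlongCoset_of_mem hiJ, extendAlongCoset_of_mem hjJ]
    exact hv.1 ⟨i, hiJ⟩ ⟨j, hjJ⟩ hij t
  · have hj : (j : ℤ) = k + 1 + n * (c + 1) := by rw [hij, hc]; ring
    rw [hc, hj, extendAlongCoset_add_mul hn (mt (hJ.add_mul_mem_iff _ c).mp hk1),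
      extendAlongCoset_add_mul hn (mt (hJ.add_mul_mem_iff _ (c + 1)).mp hk1)]
    ring

theorem extendAlongCoset_mono (hn : n ≠ 0) (hJ : IsPeriodic n J) (hv : IsFaceOn n J v)
    (hk : k ∈ J) (hk1 : k + 1 ∉ J) (hl : l ∈ J) (hlmin : ∀ m ∈ J, k < m → l ≤ m)
    (hI : ∀ m : ℤ, m ∈ I ↔ m ∈ J ∨ ∃ c : ℤ, m = k + 1 + n * c)
    (hku : ∀ t, v ⟨k, hk⟩ t ≤ u t) (hul : ∀ t, u t ≤ v ⟨l, hl⟩ t)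
    (i j : I) (hij : (i : ℤ) ≤ j) (t : Fin n) :
    extendAlongCoset n J v (k + 1) u i t ≤ extendAlongCoset n J v (k + 1) u j t := by
  have hcoset (c : ℤ) := extendAlongCoset_add_mul (v := v) (u := u) hn
    (mt (hJ.add_mul_mem_iff _ c).mp hk1)
  rcases (hI i).mp i.2 with hiJ | ⟨c, hc⟩ <;> rcases (hI j).mp j.2 with hjJ | ⟨c', hc'⟩
  · rw [extendAlongCoset_of_mem hiJ, extendAlongCoset_of_mem hjJ]
    exact hv.2.1 ⟨i, hiJ⟩ ⟨j, hjJ⟩ hij t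
  · rw [extendAlongCoset_of_mem hiJ, hc', hcoset]
    exact hv.apply_le_add_of_le hJ hk hk1 hku (i := ⟨i, hiJ⟩) (hc' ▸ hij) t
  · rw [extendAlongCoset_of_mem hjJ, hc, hcoset]
    exact hv.add_le_apply_of_le hJ hl hlmin hul (j := ⟨j, hjJ⟩) (hc ▸ hij) t
  · have hcc : c ≤ c' := le_of_mul_le_mul_left (a := (n : ℤ)) (by omega) (by omega)
    rw [hc, hc', hcoset, hcoset]
    omega

theorem sum_extendAlongCoset (hn : n ≠ 0) (hJ : IsPeriodic n J) (hv : IsFaceOn n J v)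
    (hk : k ∈ J) (hk1 : k + 1 ∉ J) (hI : ∀ m : ℤ, m ∈ I ↔ m ∈ J ∨ ∃ c : ℤ, m = k + 1 + n * c)
    (hsum : ∑ t, u t = ∑ t, v ⟨k, hk⟩ t + 1) (i : I) :
    ∑ t, extendAlongCoset n J v (k + 1) u i t = ∑ t, v ⟨k, hk⟩ t + (i - k) := by
  rcases (hI i).mp i.2 with hiJ | ⟨c, hc⟩
  · rw [extendAlongCoset_of_mem hiJ]
    exact hv.sum_eq_add ⟨k, hk⟩ ⟨i, hiJ⟩
  · simp only [hc, extendAlongCoset_add_mul hn (mt (hJ.add_mul_mem_iff _ c).mp hk1),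
      Finset.sum_add_distrib, Finset.sum_const, Finset.card_univ, Fintype.card_fin, nsmul_eq_mul,
      hsum]
    ring

theorem isFaceOn_extendAlongCoset (hn : n ≠ 0) (hJ : IsPeriodic n J) (hv : IsFaceOn n J v)
    (hk : k ∈ J) (hk1 : k + 1 ∉ J) (hl : l ∈ J) (hlmin : ∀ m ∈ J, k < m → l ≤ m)
    (hI : ∀ m : ℤ, m ∈ I ↔ m ∈ J ∨ ∃ c : ℤ, m = k + 1 + n * c)
    (hku : ∀ t, v ⟨k, hk⟩ t ≤ u t) (hul : ∀ t, u t ≤ v ⟨l, hl⟩ t)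
    (hsum : ∑ t, u t = ∑ t, v ⟨k, hk⟩ t + 1) :
    IsFaceOn n I fun i => extendAlongCoset n J v (k + 1) u i := by
  refine ⟨extendAlongCoset_add_period hn hJ hv hk1 hI,
    extendAlongCoset_mono hn hJ hv hk hk1 hl hlmin hI hku hul, fun i j => ?_⟩
  rw [sum_extendAlongCoset hn hJ hv hk hk1 hI hsum, sum_extendAlongCoset hn hJ hv hk hk1 hI hsum]
  ring

end Extension

theorem face_extension_bijection_general (n : ℕ) (hn : 1 ≤ n)
    (J : Set ℤ) (hJper : IsPeriodic n J)
    (k : ℤ) (hk : k ∈ J) (hk1 : k + 1 ∉ J)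
    (l : ℤ) (hl : l ∈ J) (hkl : k < l) (hlmin : ∀ m ∈ J, k < m → l ≤ m)
    (I : Set ℤ) (hI : ∀ m : ℤ, m ∈ I ↔ m ∈ J ∨ ∃ c : ℤ, m = k + 1 + n * c)
    (hk1I : k + 1 ∈ I)
    (v : J → Fin n → ℤ) (hv : IsFaceOn n J v) :
    Set.BijOn (fun w : I → Fin n → ℤ => w ⟨k + 1, hk1I⟩)
      {w : I → Fin n → ℤ | IsFaceOn n I w ∧
        ∀ (j : I) (h : (j : ℤ) ∈ J), w j = v ⟨(j : ℤ), h⟩}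
      {u : Fin n → ℤ | (∀ t, v ⟨k, hk⟩ t ≤ u t) ∧ (∀ t, u t ≤ v ⟨l, hl⟩ t) ∧
        (∑ t, u t) = (∑ t, v ⟨k, hk⟩ t) + 1} := by
  have hkI : k ∈ I := (hI k).mpr (Or.inl hk)
  have hlI : l ∈ I := (hI l).mpr (Or.inl hl)
  refine ⟨?_, ?_, ?_⟩
  · rintro w ⟨hw, hwv⟩
    refine ⟨fun t => ?_, fun t => ?_, ?_⟩
    · simpa only [hwv ⟨k, hkI⟩ hk] using hw.2.1 ⟨k, hkI⟩ ⟨k + 1, hk1I⟩ (by simp) t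
    · simpa only [hwv ⟨l, hlI⟩ hl] using hw.2.1 ⟨k + 1, hk1I⟩ ⟨l, hlI⟩ (by simp only; omega) t
    · simpa [hwv ⟨k, hkI⟩ hk] using hw.sum_eq_add ⟨k, hkI⟩ ⟨k + 1, hk1I⟩
  · rintro w ⟨hw, hwv⟩ w' ⟨hw', hwv'⟩ hw_eq
    exact hw.eq_of_eqOn_of_apply_eq (hJper.of_union_coset _ hI) (fun i hi => (hI i).mp hi) hk1I
      hw' (fun i hi => (hwv i hi).trans (hwv' i hi).symm) hw_eq
  · rintro u ⟨hku, hul, hsum⟩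
    exact ⟨fun i => extendAlongCoset n J v (k + 1) u i,
      ⟨isFaceOn_extendAlongCoset (Nat.one_le_iff_ne_zero.mp hn) hJper hv hk hk1 hl hlmin hI hku hul hsum,
        fun j hj => extendAlongCoset_of_mem hj⟩, extendAlongCoset_self hk1⟩

/-- **Lemma (Kottwitz–Rapoport).** Let `J ⊆ ℤ` be nonempty periodic, `k ∈ J` with
`k + 1 ∉ J`, let `l` be the smallest element of `J` greater than `k`, and let
`I = J ∪ (k + 1 + nℤ)`. For a fixed face `(v_j)_{j ∈ J}` of type `J`, the map sending a
face `(w_i)_{i ∈ I}` of type `I` with `w_j = v_j` for all `j ∈ J` to its component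
`w_{k+1}` is a bijection onto `{w ∈ ℤ^n : v_k ≤ w ≤ v_l, Σ(w) = Σ(v_k) + 1}`. -/
theorem face_extension_bijection (n : ℕ) (hn : 1 ≤ n)
    (J : Set ℤ) (hJper : IsPeriodic n J) (hJne : J.Nonempty)
    (k : ℤ) (hk : k ∈ J) (hk1 : k + 1 ∉ J)
    (l : ℤ) (hl : l ∈ J) (hkl : k < l) (hlmin : ∀ m ∈ J, k < m → l ≤ m)
    (I : Set ℤ) (hI : ∀ m : ℤ, m ∈ I ↔ m ∈ J ∨ ∃ c : ℤ, m = k + 1 + n * c)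
    (hk1I : k + 1 ∈ I)
    (v : J → Fin n → ℤ) (hv : IsFaceOn n J v) :
    Set.BijOn (fun w : I → Fin n → ℤ => w ⟨k + 1, hk1I⟩)
      {w : I → Fin n → ℤ | IsFaceOn n I w ∧
        ∀ (j : I) (h : (j : ℤ) ∈ J), w j = v ⟨(j : ℤ), h⟩}
      {u : Fin n → ℤ | (∀ t, v ⟨k, hk⟩ t ≤ u t) ∧ (∀ t, u t ≤ v ⟨l, hl⟩ t) ∧
        (∑ t, u t) = (∑ t, v ⟨k, hk⟩ t) + 1} :=
  face_extension_bijection_general n hn J hJper k hk hk1 l hl hkl hlmin I hI hk1I v hv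
end

section
/- Let n ≥ 1 and let J ⊆ I ⊆ ℤ be nonempty periodic subsets. Then the restriction map sending a face (v_i)_{i∈I} of type I to the family (v_j)_{j∈J} is a well-defined surjection from the set of faces of type I onto the set of faces of type J. -/
/-- **Restriction of faces is a well-defined surjection.** For nonempty periodic subsets
`J ⊆ I ⊆ ℤ`, restricting the index set from `I` to `J` sends faces of type `I` to faces of
type `J`, and every face of type `J` arises in this way, i.e. extends to a face of
type `I`. -/
theorem face_restriction_surjective (n : ℕ) (hn : 1 ≤ n)
    (I J : Set ℤ) (hJI : J ⊆ I)
    (hIper : IsPeriodic n I) (hJper : IsPeriodic n J)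
    (hIne : I.Nonempty) (hJne : J.Nonempty) :
    (∀ v : ℤ → Fin n → ℤ, IsFace n I v → IsFace n J v) ∧
    (∀ w : ℤ → Fin n → ℤ, IsFace n J w →
      ∃ v : ℤ → Fin n → ℤ, IsFace n I v ∧ ∀ j ∈ J, v j = w j) := by
  obtain ⟨j0, hj0⟩ := hJne
  constructor
  · rintro v ⟨h1, h2, h3⟩
    exact ⟨fun i hi => h1 i (hJI hi), fun i hi j hj => h2 i (hJI hi) j (hJI hj),
      fun i hi j hj => h3 i (hJI hi) j (hJI hj)⟩
  rintro w ⟨hw1, hw2, hw3⟩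
  have hnpos : (0:ℤ) < n := by exact_mod_cast hn
  have hJp : ∀ j ∈ J, j + n ∈ J := fun j h => (hJper j).1 h
  have hJm : ∀ j ∈ J, j - n ∈ J := fun j h => (hJper (j - n)).2 (by simpa using h)
  have hJmulp : ∀ k : ℕ, ∀ j ∈ J, j + k * n ∈ J := by
    intro k
    induction k with
    | zero => simp
    | succ m ih =>
      intro j hj
      have h2 := hJp _ (ih j hj)
      have h3 : j + ((m : ℤ) + 1) * n = j + m * n + n := by ring
      push_cast
      rw [h3]
      exact h2
  have hJmulm : ∀ k : ℕ, ∀ j ∈ J, j - k * n ∈ J := by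
    intro k
    induction k with
    | zero => simp
    | succ m ih =>
      intro j hj
      have h2 := hJm _ (ih j hj)
      have h3 : j - ((m : ℤ) + 1) * n = j - m * n - n := by ring
      push_cast
      rw [h3]
      exact h2
  have hgex : ∀ i : ℤ, ∃ gb, (gb ∈ J ∧ gb ≤ i) ∧ ∀ z, (z ∈ J ∧ z ≤ i) → z ≤ gb := by
    intro i
    apply Int.exists_greatest_of_bdd
    · exact ⟨i, fun z hz => hz.2⟩
    · refine ⟨j0 - (j0 - i).toNat * n, hJmulm _ _ hj0, ?_⟩
      have h1 : (j0 - i) ≤ ((j0 - i).toNat : ℤ) := Int.self_le_toNat _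
      have h2 : ((j0 - i).toNat : ℤ) ≤ ((j0 - i).toNat : ℤ) * n :=
        le_mul_of_one_le_right (Int.natCast_nonneg _) (by exact_mod_cast hn)
      linarith
  have hfex : ∀ i : ℤ, ∃ fb, (fb ∈ J ∧ i ≤ fb) ∧ ∀ z, (z ∈ J ∧ i ≤ z) → fb ≤ z := by
    intro i
    apply Int.exists_least_of_bdd
    · exact ⟨i, fun z hz => hz.2⟩
    · refine ⟨j0 + (i - j0).toNat * n, hJmulp _ _ hj0, ?_⟩
      have h1 : (i - j0) ≤ ((i - j0).toNat : ℤ) := Int.self_le_toNat _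
      have h2 : ((i - j0).toNat : ℤ) ≤ ((i - j0).toNat : ℤ) * n :=
        le_mul_of_one_le_right (Int.natCast_nonneg _) (by exact_mod_cast hn)
      linarith
  choose g hgP hgmax using hgex
  choose f hfP hfmin using hfex
  have hgJ : ∀ i, g i ∈ J := fun i => (hgP i).1
  have hgle : ∀ i, g i ≤ i := fun i => (hgP i).2
  have hfJ : ∀ i, f i ∈ J := fun i => (hfP i).1
  have hfge : ∀ i, i ≤ f i := fun i => (hfP i).2
  have hgf : ∀ i, g i ≤ f i := fun i => (hgle i).trans (hfge i)
  have hgshift : ∀ i, g (i + n) = g i + n := by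
    intro i
    have h1 : g i + n ≤ g (i + n) := hgmax _ _ ⟨hJp _ (hgJ i), by linarith [hgle i]⟩
    have h2 : g (i + n) - n ≤ g i := hgmax _ _ ⟨hJm _ (hgJ (i + n)), by linarith [hgle (i + n)]⟩
    linarith
  have hfshift : ∀ i, f (i + n) = f i + n := by
    intro i
    have h1 : f (i + n) ≤ f i + n := hfmin _ _ ⟨hJp _ (hfJ i), by linarith [hfge i]⟩
    have h2 : f i ≤ f (i + n) - n := hfmin _ _ ⟨hJm _ (hfJ (i + n)), by linarith [hfge (i + n)]⟩
    linarith
  have hgmem : ∀ j ∈ J, g j = j := fun j hj => le_antisymm (hgle j) (hgmax j j ⟨hj, le_refl j⟩)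
  have hfmem : ∀ j ∈ J, f j = j := fun j hj => le_antisymm (hfmin j j ⟨hj, le_refl j⟩) (hfge j)
  set D : ℤ → Fin n → ℤ := fun i t => w (f i) t - w (g i) t with hDdef
  set S : ℤ → ℕ → ℤ := fun i k => ∑ s ∈ Finset.range k, (if h : s < n then D i ⟨s, h⟩ else 0)
    with hSdef
  set v : ℤ → Fin n → ℤ :=
    fun i t => w (g i) t + (min (S i (t + 1)) (i - g i) - min (S i t) (i - g i)) with hvdef
  have hD0 : ∀ i t, 0 ≤ D i t := by
    intro i t
    have := hw2 (g i) (hgJ i) (f i) (hfJ i) (hgf i) t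
    simp only [hDdef]
    linarith
  have hSsucc : ∀ i (t : Fin n), S i ((t : ℕ) + 1) = S i (t : ℕ) + D i t := by
    intro i t
    simp [hSdef, Finset.sum_range_succ, t.isLt]
  have hS0 : ∀ i, S i 0 = 0 := by simp [hSdef]
  have hSn : ∀ i, S i n = f i - g i := by
    intro i
    have h1 : S i n = ∑ t : Fin n, D i t := by
      rw [show S i n = ∑ s ∈ Finset.range n, (if h : s < n then D i ⟨s, h⟩ else 0) from rfl]
      rw [← Fin.sum_univ_eq_sum_range (fun s => if h : s < n then D i ⟨s, h⟩ else 0) n]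
      apply Finset.sum_congr rfl
      intro t _
      simp [t.isLt]
    have h2 : ∑ t : Fin n, D i t = (∑ t, w (f i) t) - (∑ t, w (g i) t) := by
      simp [hDdef, Finset.sum_sub_distrib]
    rw [h1, h2, hw3 (g i) (hgJ i) (f i) (hfJ i)]
  have hsum : ∀ i, (∑ t, v i t) = (∑ t, w (g i) t) + (i - g i) := by
    intro i
    have hmle : i - g i ≤ S i n := by rw [hSn]; linarith [hfge i]
    have hm0 : 0 ≤ i - g i := by linarith [hgle i]
    simp only [hvdef]
    rw [Finset.sum_add_distrib]
    congr 1
    calc (∑ t : Fin n, (min (S i ((t : ℕ) + 1)) (i - g i) - min (S i (t : ℕ)) (i - g i)))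
        = ∑ k ∈ Finset.range n, (min (S i (k + 1)) (i - g i) - min (S i k) (i - g i)) :=
          Fin.sum_univ_eq_sum_range
            (fun k => min (S i (k + 1)) (i - g i) - min (S i k) (i - g i)) n
      _ = min (S i n) (i - g i) - min (S i 0) (i - g i) :=
          Finset.sum_range_sub (fun k => min (S i k) (i - g i)) n
      _ = i - g i := by rw [hS0]; omega
  have hvlb : ∀ i t, w (g i) t ≤ v i t := by
    intro i t
    have h1 := hSsucc i t
    have h2 := hD0 i t
    simp only [hvdef]
    omega
  have hvub : ∀ i t, v i t ≤ w (f i) t := by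
    intro i t
    have h1 := hSsucc i t
    have h2 := hD0 i t
    have h3 : D i t = w (f i) t - w (g i) t := rfl
    simp only [hvdef]
    omega
  have hmono_same : ∀ i i', g i = g i' → f i = f i' → i ≤ i' → ∀ t, v i t ≤ v i' t := by
    intro i i' hg hf hii t
    have hSeq : ∀ k, S i' k = S i k := by
      intro k
      simp only [hSdef, hDdef, hg, hf]
    have h1 := hSsucc i t
    have h2 := hD0 i t
    simp only [hvdef, ← hg, hSeq]
    omega
  have hvper : ∀ i t, v (i + n) t = v i t + 1 := by
    intro i t
    have hg' := hgshift i
    have hf' := hfshift i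
    have hDq : ∀ s : Fin n, D (i + n) s = D i s := by
      intro s
      have e1 : w (g i + n) s = w (g i) s + 1 := hw1 (g i) (hgJ i) s
      have e2 : w (f i + n) s = w (f i) s + 1 := hw1 (f i) (hfJ i) s
      simp only [hDdef, hg', hf', e1, e2]
      ring
    have hSq : ∀ k, S (i + n) k = S i k := by
      intro k
      simp only [hSdef]
      apply Finset.sum_congr rfl
      intro s _
      split
      · exact hDq _
      · rfl
    have e1 : w (g i + n) t = w (g i) t + 1 := hw1 (g i) (hgJ i) t
    have e3 : i + n - (g i + n) = i - g i := by ring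
    simp only [hvdef, hg', hSq, e1, e3]
    ring
  have hvJ : ∀ j ∈ J, ∀ t, v j t = w j t := by
    intro j hj t
    have hgj := hgmem j hj
    have hfj := hfmem j hj
    have hS : ∀ k, S j k = 0 := by
      intro k
      simp only [hSdef, hDdef, hgj, hfj]
      simp
    simp only [hvdef, hS, hgj]
    simp
  refine ⟨v, ⟨fun i _ t => hvper i t, ?_, ?_⟩, fun j hj => funext fun t => hvJ j hj t⟩
  · intro i _ j _ hij t
    by_cases hc : f i ≤ j
    · have h1 : f i ≤ g j := hgmax j (f i) ⟨hfJ i, hc⟩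
      calc v i t ≤ w (f i) t := hvub i t
        _ ≤ w (g j) t := hw2 _ (hfJ i) _ (hgJ j) h1 t
        _ ≤ v j t := hvlb j t
    · have h1 : g j ≤ i := by
        by_contra hgi
        push_neg at hgi
        exact hc ((hfmin i (g j) ⟨hgJ j, le_of_lt hgi⟩).trans (hgle j))
      have hgeq : g i = g j :=
        le_antisymm (hgmax j (g i) ⟨hgJ i, (hgle i).trans hij⟩) (hgmax i (g j) ⟨hgJ j, h1⟩)
      have hfeq : f i = f j :=
        le_antisymm (hfmin i (f j) ⟨hfJ j, hij.trans (hfge j)⟩)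
          (hfmin j (f i) ⟨hfJ i, le_of_not_ge hc⟩)
      exact hmono_same i j hgeq hfeq hij t
  · intro i _ j _
    have h := hw3 (g i) (hgJ i) (g j) (hgJ j)
    rw [hsum i, hsum j]
    linarith
end
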